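/- arXiv:1203.4175 — 5 statements merged into one kernel-verified Lean document; each statement's English description precedes it below -/
import Mathlib

section
/- Let K ⊆ ℝ^n be a closed convex set with Lebesgue measure vol(K) < 1/n!. Then the convex hull of the integer points of K has affine dimension at most n−1. -/
/-!
If the integer points of `K` affinely span `ℝⁿ`, then `K` contains `n + 1` affinely independent
integer points `p, p + v₁, …, p + vₙ`. Their convex hull lies in `K` and is the image of the corner
simplex `{y ≥ 0, ∑ yᵢ ≤ 1}` (of volume `1/n!`) under `y ↦ p + ∑ yᵢ vᵢ`, so it has volume
`|det (v₁, …, vₙ)| / n!`. That determinant is a nonzero integer, hence `vol K ≥ 1/n!`.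
-/

open MeasureTheory ENNReal Pointwise

theorem exists_linearIndependent_add_mem_of_vectorSpan_eq_top {k V : Type*} [Field k]
    [AddCommGroup V] [Module k V] [FiniteDimensional k V] {n : ℕ}
    (hn : Module.finrank k V = n) {S : Set V} (hS : vectorSpan k S = ⊤) {p : V} (hp : p ∈ S) :
    ∃ v : Fin n → V, LinearIndependent k v ∧ ∀ i, p + v i ∈ S := by
  rw [vectorSpan_eq_span_vsub_set_right k hp] at hS
  let b := Module.Basis.extendLe (linearIndepOn_empty k id) (Set.empty_subset _) hS.ge
  let e := b.indexEquiv (Module.finBasisOfFinrankEq k V hn)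
  refine ⟨b ∘ e.symm, b.linearIndependent.comp _ e.symm.injective, fun i => ?_⟩
  obtain ⟨x, hx, hxb⟩ := Module.Basis.extendLe_subset _ _ hS.ge (Set.mem_range_self (e.symm i))
  rw [Function.comp_apply, ← hxb]
  simpa using hx

theorem one_le_abs_det_of_forall_int {R m : Type*} [CommRing R] [LinearOrder R]
    [IsStrictOrderedRing R] [Fintype m] [DecidableEq m] {A : Matrix m m R}
    (hA : ∀ i j, ∃ z : ℤ, A i j = z) (hdet : A.det ≠ 0) : 1 ≤ |A.det| := by
  choose Z hZ using hA
  have hdetZ : A.det = ((Matrix.of Z).det : R) := by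
    rw [← eq_intCast (Int.castRingHom R), RingHom.map_det]
    congr 1
    ext i j
    simp [hZ]
  rw [hdetZ] at hdet ⊢
  exact_mod_cast Int.one_le_abs (by exact_mod_cast hdet)

theorem Convex.add_sum_smul_mem {𝕜 E ι : Type*} [Field 𝕜] [LinearOrder 𝕜] [IsStrictOrderedRing 𝕜]
    [AddCommGroup E] [Module 𝕜 E] [Fintype ι] {K : Set E} (hK : Convex 𝕜 K) {p : E} (hp : p ∈ K)
    {v : ι → E} (hv : ∀ i, p + v i ∈ K) {y : ι → 𝕜} (hy0 : ∀ i, 0 ≤ y i) (hy1 : ∑ i, y i ≤ 1) :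
    p + ∑ i, y i • v i ∈ K := by
  have hmem := hK.sum_mem (t := Finset.univ) (w := fun o : Option ι => o.elim (1 - ∑ i, y i) y)
    (z := fun o => o.elim p (p + v ·))
    (fun o _ => by cases o <;> simp [hy0, hy1]) (by simp [Fintype.sum_option])
    (fun o _ => by cases o <;> simp [hp, hv])
  convert hmem using 1
  simp only [Fintype.sum_option, Option.elim_none, Option.elim_some, smul_add,
    Finset.sum_add_distrib, ← Finset.sum_smul, sub_smul, one_smul]
  abel

def cornerSimplex (n : ℕ) (r : ℝ) : Set (Fin n → ℝ) := {x | (∀ i, 0 ≤ x i) ∧ ∑ i, x i ≤ r}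

theorem measurableSet_cornerSimplex (n : ℕ) (r : ℝ) : MeasurableSet (cornerSimplex n r) := by
  simp only [cornerSimplex, Set.ofPred_and, Set.ofPred_forall]
  exact (MeasurableSet.iInter fun i =>
      measurableSet_le measurable_const (measurable_pi_apply i)).inter
    (measurableSet_le (Finset.measurable_sum _ fun i _ => measurable_pi_apply i) measurable_const)

theorem cornerSimplex_eq_empty (n : ℕ) {r : ℝ} (hr : r < 0) : cornerSimplex n r = ∅ :=
  Set.eq_empty_of_forall_notMem fun _ ⟨hx, hsum⟩ =>
    hsum.not_gt (hr.trans_le (Finset.sum_nonneg fun i _ => hx i))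

theorem preimage_piFinSuccAbove_symm_cornerSimplex (n : ℕ) (r : ℝ) :
    (MeasurableEquiv.piFinSuccAbove (fun _ : Fin (n + 1) => ℝ) 0).symm ⁻¹' cornerSimplex (n + 1) r
      = {p | 0 ≤ p.1 ∧ p.2 ∈ cornerSimplex n (r - p.1)} := by
  ext ⟨t, y⟩
  simp only [Set.mem_preimage, MeasurableEquiv.piFinSuccAbove_symm_apply, cornerSimplex,
    Set.mem_ofPred_eq, Fin.insertNthEquiv_apply, Fin.insertNth_zero', Fin.forall_fin_succ,
    Fin.sum_univ_succ, Fin.cons_zero, Fin.cons_succ, le_sub_iff_add_le', and_assoc]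

theorem volume_prodMk_preimage_cornerSimplex (n : ℕ) {r : ℝ}
    (ih : ∀ s, 0 ≤ s → volume (cornerSimplex n s) = ENNReal.ofReal (s ^ n / n.factorial))
    (t : ℝ) :
    volume (Prod.mk t ⁻¹' {p : ℝ × (Fin n → ℝ) | 0 ≤ p.1 ∧ p.2 ∈ cornerSimplex n (r - p.1)})
      = (Set.Icc 0 r).indicator (fun t => ENNReal.ofReal ((r - t) ^ n / n.factorial)) t := by
  by_cases ht : t ∈ Set.Icc 0 r
  · have : Prod.mk t ⁻¹' {p : ℝ × (Fin n → ℝ) | 0 ≤ p.1 ∧ p.2 ∈ cornerSimplex n (r - p.1)}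
        = cornerSimplex n (r - t) := by ext; simp [ht.1]
    rw [this, ih _ (sub_nonneg.2 ht.2), Set.indicator_of_mem ht]
  · have : Prod.mk t ⁻¹' {p : ℝ × (Fin n → ℝ) | 0 ≤ p.1 ∧ p.2 ∈ cornerSimplex n (r - p.1)} = ∅ := by
      rw [Set.mem_Icc, not_and_or, not_le, not_le] at ht
      rcases ht with ht | ht
      · ext; simp [ht.not_ge]
      · ext; simp [cornerSimplex_eq_empty n (sub_neg.2 ht)]
    rw [this, measure_empty, Set.indicator_of_notMem ht]

theorem lintegral_Icc_sub_pow_div_factorial (n : ℕ) {r : ℝ} (hr : 0 ≤ r) :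
    ∫⁻ t in Set.Icc 0 r, ENNReal.ofReal ((r - t) ^ n / n.factorial)
      = ENNReal.ofReal (r ^ (n + 1) / (n + 1).factorial) := by
  rw [← ofReal_integral_eq_lintegral_ofReal (by fun_prop : Continuous _).integrableOn_Icc
    (ae_restrict_of_forall_mem measurableSet_Icc fun t ht => by
      have := sub_nonneg.2 ht.2; positivity),
    integral_Icc_eq_integral_Ioc, ← intervalIntegral.integral_of_le hr,
    intervalIntegral.integral_comp_sub_left (fun x => x ^ n / (n.factorial : ℝ)),
    intervalIntegral.integral_div, integral_pow, Nat.factorial_succ]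
  congr 1
  push_cast
  field_simp
  ring

theorem volume_cornerSimplex (n : ℕ) {r : ℝ} (hr : 0 ≤ r) :
    volume (cornerSimplex n r) = ENNReal.ofReal (r ^ n / n.factorial) := by
  induction n generalizing r with
  | zero =>
    have : cornerSimplex 0 r = Set.univ := by ext; simp [cornerSimplex, hr]
    simp [this, volume_pi]
  | succ n ih =>
    have hmeas :
        MeasurableSet {p : ℝ × (Fin n → ℝ) | 0 ≤ p.1 ∧ p.2 ∈ cornerSimplex n (r - p.1)} := by
      rw [← preimage_piFinSuccAbove_symm_cornerSimplex]
      exact (MeasurableEquiv.measurable _) (measurableSet_cornerSimplex _ _)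
    rw [volume_pi, ← ((measurePreserving_piFinSuccAbove (fun _ => volume) 0).symm).measure_preimage
      (measurableSet_cornerSimplex _ _).nullMeasurableSet,
      preimage_piFinSuccAbove_symm_cornerSimplex, Measure.prod_apply hmeas, ← volume_pi]
    simp_rw [volume_prodMk_preimage_cornerSimplex n (fun s hs => ih hs)]
    rw [lintegral_indicator measurableSet_Icc, lintegral_Icc_sub_pow_div_factorial n hr]

open Matrix in
theorem volume_add_image_cornerSimplex {n : ℕ} (p : Fin n → ℝ) (A : Matrix (Fin n) (Fin n) ℝ) :
    volume ((fun y => p + A *ᵥ y) '' cornerSimplex n 1)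
      = ENNReal.ofReal (|A.det| / n.factorial) := by
  have : (fun y => p + A *ᵥ y) '' cornerSimplex n 1 = p +ᵥ (toLin' A '' cornerSimplex n 1) := by
    rw [← Set.image_vadd, Set.image_image]
    rfl
  rw [this, measure_vadd, Measure.addHaar_image_linearMap, LinearMap.det_toLin',
    volume_cornerSimplex n zero_le_one, one_pow, ← ENNReal.ofReal_mul (abs_nonneg _), mul_one_div]

open Matrix in
theorem inv_factorial_le_volume_of_lattice_simplex {n : ℕ} {K : Set (Fin n → ℝ)}
    (hK : Convex ℝ K) {p : Fin n → ℝ} (hp : p ∈ K) (hpZ : ∀ j, ∃ z : ℤ, p j = z)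
    {v : Fin n → Fin n → ℝ} (hv : LinearIndependent ℝ v) (hvK : ∀ i, p + v i ∈ K)
    (hvZ : ∀ i j, ∃ z : ℤ, (p + v i) j = z) :
    (n.factorial : ℝ≥0∞)⁻¹ ≤ volume K := by
  have hdet : (Matrix.of v)ᵀ.det ≠ 0 := by
    rw [det_transpose]
    exact ((Matrix.of v).isUnit_iff_isUnit_det.mp (linearIndependent_rows_iff_isUnit.mp hv)).ne_zero
  have hint : ∀ j i, ∃ z : ℤ, (Matrix.of v)ᵀ j i = z := fun j i => by
    obtain ⟨a, ha⟩ := hvZ i j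
    obtain ⟨b, hb⟩ := hpZ j
    exact ⟨a - b, by simp [← ha, ← hb]⟩
  calc (n.factorial : ℝ≥0∞)⁻¹ = ENNReal.ofReal (1 / n.factorial) := by
        rw [one_div, ENNReal.ofReal_inv_of_pos (by positivity), ENNReal.ofReal_natCast]
    _ ≤ ENNReal.ofReal (|(Matrix.of v)ᵀ.det| / n.factorial) := by
        gcongr
        exact one_le_abs_det_of_forall_int hint hdet
    _ = volume ((fun y => p + (Matrix.of v)ᵀ *ᵥ y) '' cornerSimplex n 1) :=
        (volume_add_image_cornerSimplex p _).symm
    _ ≤ volume K := by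
        refine measure_mono ?_
        rintro _ ⟨y, ⟨hy0, hy1⟩, rfl⟩
        dsimp only
        rw [mulVec_transpose, vecMul_eq_sum]
        exact hK.add_sum_smul_mem hp hvK hy0 hy1


theorem stmt0_general {n : ℕ} (K : Set (Fin n → ℝ))
    (hKconv : Convex ℝ K)
    (hvol : volume K < ((n.factorial : ℝ≥0∞))⁻¹) :
    Module.finrank ℝ
      (affineSpan ℝ (convexHull ℝ {x ∈ K | ∀ i, ∃ z : ℤ, x i = (z : ℝ)})).direction
      ≤ n - 1 := by
  set S := {x ∈ K | ∀ i, ∃ z : ℤ, x i = (z : ℝ)}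
  by_contra! hdim
  rw [affineSpan_convexHull, direction_affineSpan] at hdim
  obtain ⟨p, hp⟩ : S.Nonempty := Set.nonempty_iff_ne_empty.2 fun hS => by
    rw [hS, vectorSpan_empty, finrank_bot] at hdim
    exact Nat.not_lt_zero _ hdim
  have hspan : vectorSpan ℝ S = ⊤ := by
    have hle := Submodule.finrank_le (vectorSpan ℝ S)
    rw [Module.finrank_fin_fun] at hle
    exact Submodule.eq_top_of_finrank_eq (by rw [Module.finrank_fin_fun]; omega)
  obtain ⟨v, hv, hpv⟩ :=
    exists_linearIndependent_add_mem_of_vectorSpan_eq_top (Module.finrank_fin_fun ℝ) hspan hp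
  exact hvol.not_ge <| inv_factorial_le_volume_of_lattice_simplex hKconv hp.1 hp.2 hv
    (fun i => (hpv i).1) fun i => (hpv i).2

theorem stmt0 {n : ℕ} (hn : 1 ≤ n) (K : Set (Fin n → ℝ))
    (hKclosed : IsClosed K) (hKconv : Convex ℝ K)
    (hvol : volume K < ((n.factorial : ℝ≥0∞))⁻¹) :
    Module.finrank ℝ
      (affineSpan ℝ (convexHull ℝ {x ∈ K | ∀ i, ∃ z : ℤ, x i = (z : ℝ)})).direction
      ≤ n - 1 :=
  stmt0_general K hKconv hvol
end

section
/- Let K ⊆ ℝ^n be an n-dimensional closed bounded convex set and define K̄ := {x ∈ ℝ^n : x + (1/(4n))(K − K) ⊆ K}. Then there exists an ellipsoid E centered at the origin and a point c ∈ K̄ such that c + (1/2)E ⊆ K̄ and K ⊆ c + nE. -/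
/-!
Maximise `|det T|` over the compact set of pairs `(c, T)` with `c + T(B) ⊆ K`, `B` the closed
unit ball. If some `y ∈ K` had `‖T⁻¹(y - c)‖ = d > n`, then `K` would contain the convex hull
of `c + T(B)` and `y`. In the coordinates given by `T` this hull contains the ellipsoid obtained
from `B` by moving the centre a distance `t` towards `y`, stretching by `1 + t` in that direction
and by `√(1 - 2t/(d - 1))` orthogonally to it; for suitable small `t > 0` its volume is larger,
contradicting maximality. So `c + L(B) ⊆ K ⊆ c + n L(B)` for an invertible `L`, whence
`(1/(4n))(K - K) ⊆ L(B/2)` and every point of `c + L(B/2)` lies in `K̄`.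
-/

open MeasureTheory ENNReal Pointwise

/-- An ellipsoid centered at the origin: the image of the closed unit
Euclidean ball under an invertible linear map. -/
def IsOriginEllipsoid {n : ℕ} (E : Set (EuclideanSpace ℝ (Fin n))) : Prop :=
  ∃ L : EuclideanSpace ℝ (Fin n) ≃ₗ[ℝ] EuclideanSpace ℝ (Fin n),
    E = ⇑L '' Metric.closedBall 0 1

open Metric RealInnerProductSpace

/-- In the plane, the convex hull of the unit disc and the point `(d, 0)` is the disc together
with the tangent cone from `(d, 0)`; a point at abscissa `ξ` and squared distance `ρ` from the axis
in that hull lies in `l • (d, 0) + (1 - l) • disc` for some `l ∈ [0, 1)`. -/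
theorem exists_weight_of_cap_of_cone {d ξ ρ : ℝ} (hd : 1 < d) (hξ : ξ < d)
    (hcap : d * ξ ≤ 1 → ξ ^ 2 + ρ ≤ 1) (hcone : ρ * (d ^ 2 - 1) ≤ (d - ξ) ^ 2) :
    ∃ l : ℝ, 0 ≤ l ∧ l < 1 ∧ (ξ - l * d) ^ 2 + ρ ≤ (1 - l) ^ 2 := by
  rcases le_or_gt (d * ξ) 1 with hdξ | hdξ
  · exact ⟨0, le_rfl, one_pos, by simpa using hcap hdξ⟩
  have he : 0 < d ^ 2 - 1 := by nlinarith
  refine ⟨(d * ξ - 1) / (d ^ 2 - 1), div_nonneg (by linarith) he.le, ?_, ?_⟩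
  · rw [div_lt_one he]; nlinarith
  · have hgap : (1 - (d * ξ - 1) / (d ^ 2 - 1)) ^ 2 - (ξ - (d * ξ - 1) / (d ^ 2 - 1) * d) ^ 2
        = (d - ξ) ^ 2 / (d ^ 2 - 1) := by
      field_simp; ring
    have : ρ ≤ (d - ξ) ^ 2 / (d ^ 2 - 1) := (le_div_iff₀ he).2 hcone
    linarith

section Ellipse

/- The hypothesis `hE` below says that the point at abscissa `ξ` and squared distance `ρ` from the
axis lies in the ellipse with centre `(t, 0)` and semi-axes `1 + t` and `√b`. -/

variable {d t b ξ ρ : ℝ}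

theorem mem_Icc_of_ellipse (ht : 0 ≤ t) (hb0 : 0 < b) (hρ : 0 ≤ ρ)
    (hE : ρ * (1 + t) ^ 2 ≤ b * ((1 + t) ^ 2 - (ξ - t) ^ 2)) : ξ ∈ Set.Icc (-1) (1 + 2 * t) := by
  have hsq : (ξ - t) ^ 2 ≤ (1 + t) ^ 2 := by nlinarith [mul_nonneg hρ (sq_nonneg (1 + t))]
  have := abs_le_of_sq_le_sq' hsq (by linarith)
  constructor <;> linarith

theorem mul_sq_sub_one_le_sq_of_ellipse (hd : 1 < d) (ht : 0 ≤ t)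
    (hb : b * (d - 1) = d - 1 - 2 * t) (hb0 : 0 < b)
    (hE : ρ * (1 + t) ^ 2 ≤ b * ((1 + t) ^ 2 - (ξ - t) ^ 2)) :
    ρ * (d ^ 2 - 1) ≤ (d - ξ) ^ 2 := by
  have hd1 : 0 < d - 1 := by linarith
  have he : 0 < d ^ 2 - 1 := by nlinarith
  have h2t : 0 < d - 1 - 2 * t := hb ▸ mul_pos hb0 hd1
  set A := (1 + t) ^ 2 * (d - 1) + (d ^ 2 - 1) * (d - 1 - 2 * t)
  have hA : 0 < A := add_pos_of_nonneg_of_pos (by positivity) (mul_pos he h2t)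
  -- the ellipse is tangent to the cone: the defect is a perfect square in `ξ`
  have hsq : 4 * A * ((d - 1) * (1 + t) ^ 2 * (d - ξ) ^ 2
      + (d ^ 2 - 1) * (b * (d - 1)) * ((ξ - t) ^ 2 - (1 + t) ^ 2))
      = (2 * A * ξ - 2 * ((1 + t) ^ 2 * d * (d - 1) + (d ^ 2 - 1) * (d - 1 - 2 * t) * t)) ^ 2 :=
    by
    rw [hb]; ring
  have hQ : 0 ≤ (d - 1) * (1 + t) ^ 2 * (d - ξ) ^ 2
      + (d ^ 2 - 1) * (b * (d - 1)) * ((ξ - t) ^ 2 - (1 + t) ^ 2) :=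
    nonneg_of_mul_nonneg_right (hsq ▸ sq_nonneg _) (by positivity)
  have hE' := mul_le_mul_of_nonneg_right hE (mul_nonneg he.le hd1.le)
  refine le_of_mul_le_mul_right (a := (d - 1) * (1 + t) ^ 2) ?_ (mul_pos hd1 (by positivity))
  nlinarith

theorem sq_add_le_one_of_ellipse (hd : 1 < d) (ht : 0 ≤ t) (hb : b * (d - 1) = d - 1 - 2 * t)
    (hb0 : 0 < b) (hρ : 0 ≤ ρ) (hE : ρ * (1 + t) ^ 2 ≤ b * ((1 + t) ^ 2 - (ξ - t) ^ 2))
    (hdξ : d * ξ ≤ 1) : ξ ^ 2 + ρ ≤ 1 := by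
  have hd1 : 0 < d - 1 := by linarith
  have hb1 : b ≤ (1 + t) ^ 2 :=
    calc b ≤ 1 := le_of_mul_le_mul_right (by linarith : b * (d - 1) ≤ 1 * (d - 1)) hd1
      _ ≤ (1 + t) ^ 2 := by nlinarith
  have hξ := (mem_Icc_of_ellipse ht hb0 hρ hE).1
  set Q := (1 + t) ^ 2 * (d ^ 2 - 1) - b * ((1 + t) ^ 2 * d ^ 2 - (1 - t * d) ^ 2)
  have hQ : 0 ≤ Q := by
    have : (d - 1) * Q = t ^ 2 * (d + 1) ^ 3 := by
      linear_combination (-((1 + t) ^ 2 * d ^ 2 - (1 - t * d) ^ 2)) * hb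
    exact nonneg_of_mul_nonneg_right (this ▸ by positivity) hd1
  have hiden : d ^ 2 * (d + 1) * ((1 + t) ^ 2 * (1 - ξ ^ 2) - b * ((1 + t) ^ 2 - (ξ - t) ^ 2))
      = d * (ξ + 1) * Q + ((1 + t) ^ 2 - b) * d * (d + 1) * ((ξ + 1) * (1 - d * ξ)) := by
    ring
  have hP : b * ((1 + t) ^ 2 - (ξ - t) ^ 2) ≤ (1 + t) ^ 2 * (1 - ξ ^ 2) := by
    refine sub_nonneg.1 (nonneg_of_mul_nonneg_right (hiden ▸ add_nonneg ?_ ?_)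
      (by positivity : 0 < d ^ 2 * (d + 1)))
    · exact mul_nonneg (mul_nonneg (by linarith) (by linarith)) hQ
    · exact mul_nonneg (mul_nonneg (mul_nonneg (by linarith) (by linarith)) (by linarith))
        (mul_nonneg (by linarith) (by linarith))
  have : (1 + t) ^ 2 * (ξ ^ 2 + ρ) ≤ (1 + t) ^ 2 * 1 := by nlinarith
  exact le_of_mul_le_mul_left this (by positivity)

theorem exists_weight_of_ellipse (hd : 1 < d) (ht : 0 ≤ t) (hb : b * (d - 1) = d - 1 - 2 * t)
    (hb0 : 0 < b) (hρ : 0 ≤ ρ) (hE : ρ * (1 + t) ^ 2 ≤ b * ((1 + t) ^ 2 - (ξ - t) ^ 2)) :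
    ∃ l : ℝ, 0 ≤ l ∧ l < 1 ∧ (ξ - l * d) ^ 2 + ρ ≤ (1 - l) ^ 2 := by
  have h2t : 0 < d - 1 - 2 * t := hb ▸ mul_pos hb0 (by linarith)
  have hξ : ξ < d := by linarith [(mem_Icc_of_ellipse ht hb0 hρ hE).2]
  exact exists_weight_of_cap_of_cone hd hξ (sq_add_le_one_of_ellipse hd ht hb hb0 hρ hE)
    (mul_sq_sub_one_le_sq_of_ellipse hd ht hb hb0 hE)

end Ellipse

theorem exists_one_lt_sq_mul_pow {m : ℕ} {d : ℝ} (hmd : (m : ℝ) + 1 < d) :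
    ∃ t : ℝ, 0 < t ∧ 2 * t < d - 1 ∧ 1 < (1 + t) ^ 2 * (1 - 2 * t / (d - 1)) ^ m := by
  have hm : (0 : ℝ) ≤ m := m.cast_nonneg
  have hd1 : 0 < d - 1 := by linarith
  have hd0 : d ≠ 0 := by linarith
  set t := (d - 1 - m) / (8 * d) with ht_def
  have hdt : 8 * d * t = d - 1 - m := by rw [ht_def]; field_simp
  have ht : 0 < t := div_pos (by linarith) (by linarith)
  have ht8 : t < 1 / 8 := by nlinarith
  have h2t : 2 * t < d - 1 := by nlinarith
  refine ⟨t, ht, h2t, ?_⟩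
  have hbern : 1 - 2 * m * t / (d - 1) ≤ (1 - 2 * t / (d - 1)) ^ m :=
    calc 1 - 2 * m * t / (d - 1) = 1 + m * -(2 * t / (d - 1)) := by ring
      _ ≤ (1 + -(2 * t / (d - 1))) ^ m :=
        one_add_mul_le_pow (by linarith [(div_lt_one hd1).2 h2t]) m
      _ = (1 - 2 * t / (d - 1)) ^ m := by rw [← sub_eq_add_neg]
  refine lt_of_lt_of_le ?_ (mul_le_mul_of_nonneg_left hbern (by positivity))
  have hgain : (1 + t) ^ 2 * (1 - 2 * m * t / (d - 1)) - 1
      = t * ((2 + t) * (d - 1) - 2 * m * (1 + t) ^ 2) / (d - 1) := by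
    field_simp; ring
  refine sub_pos.1 (hgain ▸ div_pos (mul_pos ht ?_) hd1)
  nlinarith [mul_pos ht ht]

theorem LinearMap.det_id_add_smulRight {𝕜 M : Type*} [Field 𝕜] [AddCommGroup M] [Module 𝕜 M]
    [FiniteDimensional 𝕜 M] (f : M →ₗ[𝕜] 𝕜) (x : M) :
    LinearMap.det (LinearMap.id + f.smulRight x) = 1 + f x := by
  let b := Module.finBasis 𝕜 M
  rw [← LinearMap.det_toMatrix b, map_add, LinearMap.toMatrix_id, LinearMap.toMatrix_smulRight,
    Matrix.vecMulVec_eq Unit, Matrix.det_one_add_replicateCol_mul_replicateRow]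
  conv_rhs => rw [← b.sum_repr x, map_sum]
  simp [dotProduct, mul_comm]

section Stretch

variable {E : Type*} [NormedAddCommGroup E] [InnerProductSpace ℝ E]

/-- For a unit vector `v`: multiplication by `α` along `v` and by `β` on `v`'s orthogonal
complement. -/
noncomputable def stretchAlong (v : E) (α β : ℝ) : E →L[ℝ] E :=
  β • ContinuousLinearMap.id ℝ E + (α - β) • (innerSL ℝ v).smulRight v

theorem stretchAlong_apply (v : E) (α β : ℝ) (x : E) :
    stretchAlong v α β x = β • x + ((α - β) * ⟪v, x⟫) • v := by
  simp [stretchAlong, smul_smul]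

theorem det_stretchAlong [FiniteDimensional ℝ E] {v : E} (hv : ‖v‖ = 1) (α : ℝ) {β : ℝ}
    (hβ : β ≠ 0) : (stretchAlong v α β).det = α * β ^ (Module.finrank ℝ E - 1) := by
  have : Nontrivial E := ⟨⟨v, 0, by rintro rfl; simp at hv⟩⟩
  obtain ⟨k, hk⟩ := Nat.exists_eq_add_one_of_ne_zero (Module.finrank_pos (R := ℝ) (M := E)).ne'
  have hD : (stretchAlong v α β : E →ₗ[ℝ] E)
      = β • (LinearMap.id + (((α - β) / β) • innerₛₗ ℝ v).smulRight v) := by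
    ext x
    simp only [ContinuousLinearMap.coe_coe, stretchAlong_apply, LinearMap.smul_apply,
      LinearMap.add_apply, LinearMap.id_coe, id_eq, LinearMap.coe_smulRight, innerₛₗ_apply_apply,
      smul_eq_mul, smul_add, smul_smul]
    congr 2
    field_simp
  have hvv : ⟪v, v⟫ = 1 := (inner_eq_one_iff_of_norm_eq_one hv hv).2 rfl
  rw [ContinuousLinearMap.det, hD, LinearMap.det_smul, LinearMap.det_id_add_smulRight]
  simp only [LinearMap.smul_apply, innerₛₗ_apply_apply, hvv, smul_eq_mul, mul_one]
  rw [hk, Nat.add_sub_cancel, pow_succ]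
  field_simp
  ring

theorem norm_sq_smul_add_smul_sub_inner_smul {v : E} (hv : ‖v‖ = 1) (a c : ℝ) (x : E) :
    ‖a • v + c • (x - ⟪v, x⟫ • v)‖ ^ 2 = a ^ 2 + c ^ 2 * (‖x‖ ^ 2 - ⟪v, x⟫ ^ 2) := by
  have hvv : ⟪v, v⟫ = 1 := (inner_eq_one_iff_of_norm_eq_one hv hv).2 rfl
  rw [← real_inner_self_eq_norm_sq, ← real_inner_self_eq_norm_sq]
  simp only [inner_add_left, inner_add_right, inner_smul_left, inner_smul_right, inner_sub_left,
    inner_sub_right, hvv, real_inner_comm x v, RCLike.conj_to_real]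
  ring

end Stretch

section Inscribed

variable {V : Type*} [NormedAddCommGroup V] [NormedSpace ℝ V] {K : Set V}

/-- `(c, T)` stands for the possibly degenerate ellipsoid `c + T (closedBall 0 1)`. -/
def inscribedEllipsoids (K : Set V) : Set (V × (V →L[ℝ] V)) :=
  {p | ∀ x : V, ‖x‖ ≤ 1 → p.1 + p.2 x ∈ K}

theorem isClosed_inscribedEllipsoids (hK : IsClosed K) : IsClosed (inscribedEllipsoids K) := by
  simp only [inscribedEllipsoids, Set.ofPred_forall]
  refine isClosed_iInter fun x => isClosed_iInter fun _ => hK.preimage ?_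
  fun_prop

theorem isBounded_inscribedEllipsoids (hK : Bornology.IsBounded K) :
    Bornology.IsBounded (inscribedEllipsoids K) := by
  obtain ⟨R, hR⟩ := hK.subset_closedBall 0
  have hnorm : ∀ y ∈ K, ‖y‖ ≤ R := fun y hy => by simpa using hR hy
  refine ((isBounded_closedBall (x := (0 : V)) (r := R)).prod
    (isBounded_closedBall (x := (0 : V →L[ℝ] V)) (r := 2 * R))).subset fun ⟨c, T⟩ hp => ?_
  have hc : ‖c‖ ≤ R := by simpa using hnorm _ (hp 0 (by simp))
  refine ⟨by simpa using hc, ?_⟩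
  rw [mem_closedBall, dist_zero_right]
  refine ContinuousLinearMap.opNorm_le_of_unit_norm (by linarith [norm_nonneg c]) fun x hx => ?_
  calc ‖T x‖ = ‖(c + T x) - c‖ := by rw [add_sub_cancel_left]
    _ ≤ ‖c + T x‖ + ‖c‖ := norm_sub_le _ _
    _ ≤ 2 * R := by linarith [hnorm _ (hp x hx.le)]

theorem exists_isMaxOn_abs_det_inscribedEllipsoids [FiniteDimensional ℝ V] (hKc : IsClosed K)
    (hKb : Bornology.IsBounded K) (hKi : (interior K).Nonempty) :
    ∃ p ∈ inscribedEllipsoids K, p.2.det ≠ 0 ∧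
      ∀ q ∈ inscribedEllipsoids K, |q.2.det| ≤ |p.2.det| := by
  obtain ⟨z, hz⟩ := hKi
  obtain ⟨ε, hε, hball⟩ := isOpen_iff.mp isOpen_interior z hz
  have hsmall : (z, (ε / 2) • ContinuousLinearMap.id ℝ V) ∈ inscribedEllipsoids K := by
    intro x hx
    refine interior_subset (hball ?_)
    rw [mem_ball, dist_self_add_left]
    have : ‖(ε / 2) • x‖ ≤ ε / 2 := by
      rw [norm_smul, Real.norm_of_nonneg (by positivity)]
      exact mul_le_of_le_one_right (by positivity) hx
    simpa using this.trans_lt (half_lt_self hε)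
  have hcompact : IsCompact (inscribedEllipsoids K) :=
    isCompact_of_isClosed_isBounded (isClosed_inscribedEllipsoids hKc)
      (isBounded_inscribedEllipsoids hKb)
  obtain ⟨p, hp, hmax⟩ := hcompact.exists_isMaxOn ⟨_, hsmall⟩
    (ContinuousLinearMap.continuous_det.comp continuous_snd).abs.continuousOn
  refine ⟨p, hp, fun h0 => ?_, fun q hq => hmax hq⟩
  have hdet : ((ε / 2) • ContinuousLinearMap.id ℝ V).det = (ε / 2) ^ Module.finrank ℝ V := by
    rw [ContinuousLinearMap.det, ContinuousLinearMap.toLinearMap_smul,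
      ContinuousLinearMap.coe_id, LinearMap.det_smul, LinearMap.det_id, mul_one]
  have hle : |((ε / 2) • ContinuousLinearMap.id ℝ V).det| ≤ |p.2.det| := hmax hsmall
  rw [hdet, h0, abs_zero, abs_nonpos_iff] at hle
  exact pow_ne_zero _ (by positivity) hle

theorem add_mem_of_norm_sub_smul_le {c q x : V} {T : V →L[ℝ] V} {l : ℝ}
    (hp : (c, T) ∈ inscribedEllipsoids K) (hK : Convex ℝ K) (hq : c + T q ∈ K)
    (hl0 : 0 ≤ l) (hl1 : l < 1) (hx : ‖x - l • q‖ ≤ 1 - l) : c + T x ∈ K := by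
  set w := (1 - l)⁻¹ • (x - l • q)
  have hl : 1 - l ≠ 0 := by linarith
  have hw : ‖w‖ ≤ 1 := by
    rw [norm_smul, norm_inv, Real.norm_of_nonneg (by linarith)]
    exact inv_mul_le_one_of_le₀ hx (by linarith)
  have hTw : (1 - l) • (c + T w) = (1 - l) • c + (T x - l • T q) := by
    simp only [w, map_smul, map_sub, smul_add, smul_smul, mul_inv_cancel₀ hl, one_smul]
  have hx : c + T x = l • (c + T q) + (1 - l) • (c + T w) := by
    rw [hTw]; module
  rw [hx]
  exact hK hq (hp w hw) hl0 (by linarith) (by ring)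

end Inscribed

section John

variable {E : Type*} [NormedAddCommGroup E] [InnerProductSpace ℝ E]

theorem exists_norm_stretchAlong_sub_smul_le {v x : E} (hv : ‖v‖ = 1) (hx : ‖x‖ ≤ 1)
    {d t b : ℝ} (hd : 1 < d) (ht : 0 ≤ t) (hb : b * (d - 1) = d - 1 - 2 * t) (hb0 : 0 < b) :
    ∃ l : ℝ, 0 ≤ l ∧ l < 1 ∧ ‖t • v + stretchAlong v (1 + t) √b x - l • d • v‖ ≤ 1 - l := by
  set x₁ := ⟪v, x⟫
  have hx₁ : x₁ ^ 2 ≤ ‖x‖ ^ 2 := by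
    have := abs_real_inner_le_norm v x
    rw [hv, one_mul] at this
    exact sq_le_sq' (abs_le.1 this).1 (abs_le.1 this).2
  have hx2 : ‖x‖ ^ 2 ≤ 1 := pow_le_one₀ (norm_nonneg x) hx
  have hE : b * (‖x‖ ^ 2 - x₁ ^ 2) * (1 + t) ^ 2
      ≤ b * ((1 + t) ^ 2 - (t + (1 + t) * x₁ - t) ^ 2) := by
    have := mul_le_mul_of_nonneg_left hx2 (by positivity : 0 ≤ b * (1 + t) ^ 2)
    linarith
  obtain ⟨l, hl0, hl1, hl⟩ :=
    exists_weight_of_ellipse hd ht hb hb0 (mul_nonneg hb0.le (by linarith)) hE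
  refine ⟨l, hl0, hl1, (pow_le_pow_iff_left₀ (norm_nonneg _) (by linarith) two_ne_zero).1 ?_⟩
  have hsplit : t • v + stretchAlong v (1 + t) √b x - l • d • v
      = (t + (1 + t) * x₁ - l * d) • v + √b • (x - x₁ • v) := by
    rw [stretchAlong_apply]; module
  rwa [hsplit, norm_sq_smul_add_smul_sub_inner_smul hv, Real.sq_sqrt hb0.le]

theorem stretch_mem_inscribedEllipsoids {K : Set E} (hK : Convex ℝ K) {c v : E} {T : E →L[ℝ] E}
    (hp : (c, T) ∈ inscribedEllipsoids K) (hv : ‖v‖ = 1) {d t b : ℝ} (hy : c + T (d • v) ∈ K)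
    (hd : 1 < d) (ht : 0 ≤ t) (hb : b * (d - 1) = d - 1 - 2 * t) (hb0 : 0 < b) :
    (c + T (t • v), T ∘L stretchAlong v (1 + t) √b) ∈ inscribedEllipsoids K := by
  intro x hx
  obtain ⟨l, hl0, hl1, hl⟩ := exists_norm_stretchAlong_sub_smul_le hv hx hd ht hb hb0
  simpa [add_assoc] using add_mem_of_norm_sub_smul_le hp hK hy hl0 hl1 hl

theorem exists_john_ellipsoid [FiniteDimensional ℝ E] {K : Set E}
    (hKc : IsClosed K) (hKb : Bornology.IsBounded K) (hK : Convex ℝ K)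
    (hKi : (interior K).Nonempty) :
    ∃ (L : E ≃ₗ[ℝ] E) (c : E), (∀ x, ‖x‖ ≤ 1 → c + L x ∈ K) ∧
      ∀ y ∈ K, ‖L.symm (y - c)‖ ≤ Module.finrank ℝ E := by
  obtain ⟨⟨c, T⟩, hp, hT, hmax⟩ := exists_isMaxOn_abs_det_inscribedEllipsoids hKc hKb hKi
  set L := LinearMap.equivOfDetNeZero (T : E →ₗ[ℝ] E) hT
  refine ⟨L, c, hp, fun y hy => ?_⟩
  by_contra! hfar
  set q := L.symm (y - c)
  set d := ‖q‖
  have hq : q ≠ 0 := norm_pos_iff.1 ((Nat.cast_nonneg _).trans_lt hfar)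
  have : Nontrivial E := ⟨⟨q, 0, hq⟩⟩
  obtain ⟨m, hm⟩ := Nat.exists_eq_add_one_of_ne_zero (Module.finrank_pos (R := ℝ) (M := E)).ne'
  rw [hm, Nat.cast_add_one] at hfar
  obtain ⟨t, ht, h2t, hgain⟩ := exists_one_lt_sq_mul_pow hfar
  have hd : 1 < d := by linarith [(Nat.cast_nonneg m : (0 : ℝ) ≤ m)]
  set b := 1 - 2 * t / (d - 1)
  have hb : b * (d - 1) = d - 1 - 2 * t := by
    simp only [b, sub_mul, one_mul, div_mul_cancel₀ _ (by linarith : d - 1 ≠ 0)]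
  have hb0 : 0 < b := by linarith [(div_lt_one (by linarith : 0 < d - 1)).2 h2t]
  set v := d⁻¹ • q
  have hv : ‖v‖ = 1 := by
    rw [norm_smul, norm_inv, Real.norm_of_nonneg (norm_nonneg q),
      inv_mul_cancel₀ (norm_ne_zero_iff.2 hq)]
  have hTq : T q = y - c := L.apply_symm_apply (y - c)
  have hy' : c + T (d • v) ∈ K := by
    rwa [smul_inv_smul₀ (norm_ne_zero_iff.2 hq), hTq, add_sub_cancel]
  have hle := hmax _ (stretch_mem_inscribedEllipsoids hK hp hv hy' hd ht.le hb hb0)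
  have hgrow : 1 < (1 + t) * √b ^ m := by
    rwa [← one_lt_sq_iff₀ (by positivity), mul_pow, ← pow_mul, mul_comm m, pow_mul,
      Real.sq_sqrt hb0.le]
  have hcomp : (T ∘L stretchAlong v (1 + t) √b).det = T.det * (stretchAlong v (1 + t) √b).det :=
    LinearMap.det_comp _ _
  rw [hcomp, det_stretchAlong hv _ (Real.sqrt_pos.2 hb0).ne', hm, Nat.add_sub_cancel, abs_mul,
    abs_of_pos (by positivity : 0 < (1 + t) * √b ^ m)] at hle
  have hTpos : 0 < |T.det| := abs_pos.2 hT
  nlinarith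

end John

section Shrink

variable {V : Type*} [NormedAddCommGroup V] [NormedSpace ℝ V] {K : Set V} {L : V ≃ₗ[ℝ] V}
  {c : V} {r s : ℝ}

theorem smul_image_closedBall_one (L : V ≃ₗ[ℝ] V) (hr : 0 ≤ r) :
    r • (L '' closedBall 0 1) = L '' closedBall 0 r := by
  rw [← image_smul_set, smul_unitClosedBall_of_nonneg hr]

theorem smul_sub_subset_image_closedBall (hs : 0 ≤ s) (hout : ∀ y ∈ K, ‖L.symm (y - c)‖ ≤ r) :
    s • (K - K) ⊆ L '' closedBall 0 (2 * s * r) := by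
  rintro _ ⟨_, ⟨y₁, hy₁, y₂, hy₂, rfl⟩, rfl⟩
  refine ⟨s • (L.symm (y₁ - c) - L.symm (y₂ - c)), ?_, by simp⟩
  rw [mem_closedBall_zero_iff, norm_smul, Real.norm_of_nonneg hs]
  calc s * ‖L.symm (y₁ - c) - L.symm (y₂ - c)‖ ≤ s * (r + r) :=
        mul_le_mul_of_nonneg_left
          ((norm_sub_le _ _).trans (add_le_add (hout y₁ hy₁) (hout y₂ hy₂))) hs
    _ = 2 * s * r := by ring

theorem vadd_image_closedBall_subset (hin : ∀ x, ‖x‖ ≤ 1 → c + L x ∈ K)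
    (hout : ∀ y ∈ K, ‖L.symm (y - c)‖ ≤ r) (hs : 0 ≤ s) :
    c +ᵥ L '' closedBall 0 (1 - 2 * s * r) ⊆ {x | x +ᵥ s • (K - K) ⊆ K} := by
  rintro _ ⟨_, ⟨u₀, hu₀, rfl⟩, rfl⟩ _ ⟨_, hz, rfl⟩
  obtain ⟨u, hu, rfl⟩ := smul_sub_subset_image_closedBall hs hout hz
  rw [mem_closedBall_zero_iff] at hu hu₀
  change c + L u₀ + L u ∈ K
  rw [add_assoc, ← map_add]
  exact hin _ ((norm_add_le _ _).trans (by linarith))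

end Shrink

theorem stmt3_general {n : ℕ} (K : Set (EuclideanSpace ℝ (Fin n)))
    (hKclosed : IsClosed K) (hKbdd : Bornology.IsBounded K)
    (hKconv : Convex ℝ K) (hKint : (interior K).Nonempty)
    (Kbar : Set (EuclideanSpace ℝ (Fin n)))
    (hKbar : Kbar = {x | x +ᵥ (1 / (4 * n) : ℝ) • (K - K) ⊆ K}) :
    ∃ (E : Set (EuclideanSpace ℝ (Fin n))) (c : EuclideanSpace ℝ (Fin n)),
      IsOriginEllipsoid E ∧ c ∈ Kbar ∧
      c +ᵥ (1 / 2 : ℝ) • E ⊆ Kbar ∧ K ⊆ c +ᵥ (n : ℝ) • E := by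
  obtain ⟨L, c, hin, hout⟩ := exists_john_ellipsoid hKclosed hKbdd hKconv hKint
  rw [finrank_euclideanSpace_fin] at hout
  have hρ : 2 * (1 / (4 * n : ℝ)) * n ≤ 1 / 2 := by
    have := inv_mul_le_one (a := (n : ℝ))
    rw [one_div, mul_inv, mul_assoc, mul_assoc]
    linarith
  have hhalf : c +ᵥ (1 / 2 : ℝ) • (L '' closedBall 0 1) ⊆ Kbar := by
    rw [hKbar, smul_image_closedBall_one L (by norm_num)]
    refine subset_trans ?_ (vadd_image_closedBall_subset hin hout (by positivity))
    exact Set.vadd_set_mono (Set.image_mono (closedBall_subset_closedBall (by linarith)))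
  refine ⟨L '' closedBall 0 1, c, ⟨L, rfl⟩, ?_, hhalf, fun y hy => ?_⟩
  · simpa using hhalf (Set.vadd_mem_vadd_set (Set.zero_mem_smul_set ⟨0, by simp, map_zero L⟩))
  · rw [smul_image_closedBall_one L n.cast_nonneg]
    exact ⟨_, ⟨L.symm (y - c), mem_closedBall_zero_iff.2 (hout y hy), rfl⟩, by simp⟩

theorem stmt3 {n : ℕ} (hn : 1 ≤ n) (K : Set (EuclideanSpace ℝ (Fin n)))
    (hKclosed : IsClosed K) (hKbdd : Bornology.IsBounded K)
    (hKconv : Convex ℝ K) (hKint : (interior K).Nonempty)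
    (Kbar : Set (EuclideanSpace ℝ (Fin n)))
    (hKbar : Kbar = {x | x +ᵥ (1 / (4 * n) : ℝ) • (K - K) ⊆ K}) :
    ∃ (E : Set (EuclideanSpace ℝ (Fin n))) (c : EuclideanSpace ℝ (Fin n)),
      IsOriginEllipsoid E ∧ c ∈ Kbar ∧
      c +ᵥ (1 / 2 : ℝ) • E ⊆ Kbar ∧ K ⊆ c +ᵥ (n : ℝ) • E :=
  stmt3_general K hKclosed hKbdd hKconv hKint Kbar hKbar
end

section
/- Let K ⊆ ℝ^n be an n-dimensional compact convex set, let K̄ := {x : x + (1/(4n))(K − K) ⊆ K}, let x* ∈ K̄, and let H⁺ be a closed half-space whose boundary hyperplane contains x*. Then vol(K ∩ H⁺) ≤ (1 − 1/(n^n · 2^{n+1})) · vol(K). -/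
/-!
The body `S = (1/(4n))(K - K)` is centrally symmetric, and `x* + S ⊆ K` by the choice of `x*`.
A hyperplane through `x*` therefore cuts off at least `vol(S)/2` from `K` on either side, and
by the Brunn–Minkowski inequality `vol(K - K) ≥ 2ⁿ vol(K)` this is at least
`vol(K)/(nⁿ 2ⁿ⁺¹)`.

Brunn–Minkowski is proved in the multiplicative form `4ⁿ vol(A) vol(B) ≤ vol(A + B)²` by the
Hadwiger–Ohmann argument: for finite unions of boxes with disjoint interiors, induct on the
number of boxes, splitting `A` by a coordinate hyperplane that separates two of its boxes and
`B` by a parallel hyperplane cutting off the same fraction of its volume. Compact sets are then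
squeezed between such unions and their closed thickenings.
-/

open MeasureTheory ENNReal Pointwise Set Metric Filter Topology

section HalfSpaces

variable {E : Type*} [NormedAddCommGroup E] [NormedSpace ℝ E] [MeasurableSpace E] [BorelSpace E]
  [FiniteDimensional ℝ E] (μ : Measure E) [μ.IsAddHaarMeasure] {f : E →ₗ[ℝ] ℝ}

theorem measure_preimage_singleton_eq_zero (hf : f ≠ 0) (t : ℝ) : μ (f ⁻¹' {t}) = 0 := by
  obtain ⟨x, rfl⟩ := (f.surjective_or_eq_zero.resolve_right hf) t
  have : f ⁻¹' {f x} = x +ᵥ (LinearMap.ker f : Set E) := by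
    ext y
    refine ⟨fun hy => ⟨y - x, by simp_all, add_sub_cancel _ _⟩, ?_⟩
    rintro ⟨z, hz, rfl⟩
    simp_all
  rw [this, measure_vadd]
  exact Measure.addHaar_submodule μ _ fun h => hf (LinearMap.ker_eq_top.1 h)

theorem measure_inter_le_add_measure_inter_ge (hf : f ≠ 0) {s : Set E}
    (hs : NullMeasurableSet s μ) (t : ℝ) :
    μ (s ∩ {x | f x ≤ t}) + μ (s ∩ {x | t ≤ f x}) = μ s := by
  have hdisj : AEDisjoint μ (s ∩ {x | f x ≤ t}) (s ∩ {x | t ≤ f x}) :=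
    measure_mono_null (fun x hx => le_antisymm hx.1.2 hx.2.2)
      (measure_preimage_singleton_eq_zero μ hf t)
  have hmeas : MeasurableSet {x | t ≤ f x} :=
    measurableSet_le measurable_const f.continuous_of_finiteDimensional.measurable
  rw [← measure_union₀ (hs.inter hmeas.nullMeasurableSet) hdisj, ← inter_union_distrib_left]
  exact congrArg μ (inter_eq_left.2 fun x _ => le_total (f x) t)

theorem two_mul_measure_vadd_inter_ge (hf : f ≠ 0) {s : Set E} (hs : NullMeasurableSet s μ)
    (hsymm : -s = s) (x : E) : 2 * μ ((x +ᵥ s) ∩ {y | f x ≤ f y}) = μ s := by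
  have htrans : (x +ᵥ s) ∩ {y | f x ≤ f y} = x +ᵥ (s ∩ {y | 0 ≤ f y}) := by
    ext y
    simp [mem_vadd_set_iff_neg_vadd_mem, sub_nonneg, ← sub_eq_neg_add]
  have hflip : s ∩ {y | f y ≤ 0} = -(s ∩ {y | 0 ≤ f y}) := by
    rw [inter_neg, hsymm]
    ext y
    simp
  rw [htrans, measure_vadd, ← measure_inter_le_add_measure_inter_ge μ hf hs 0, hflip,
    Measure.measure_neg, two_mul]

end HalfSpaces

theorem ENNReal.le_ofReal_one_sub_mul {x y z : ℝ≥0∞} {ε : ℝ} (hz : z ≠ ⊤) (hxy : x + y = z)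
    (hy : ENNReal.ofReal ε * z ≤ y) : x ≤ ENNReal.ofReal (1 - ε) * z := by
  rw [← ENNReal.add_le_add_iff_right (mul_ne_top ofReal_ne_top hz)]
  calc x + ENNReal.ofReal ε * z ≤ x + y := by gcongr
    _ = ENNReal.ofReal (1 - ε + ε) * z := by simp [hxy]
    _ ≤ (ENNReal.ofReal (1 - ε) + ENNReal.ofReal ε) * z := by gcongr; exact ofReal_add_le
    _ = ENNReal.ofReal (1 - ε) * z + ENNReal.ofReal ε * z := add_mul _ _ _

theorem ENNReal.mul_mul_le_sq_of_split {c a b a₁ a₂ b₁ b₂ u₁ u₂ w : ℝ≥0∞}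
    (ha : a₁ + a₂ = a) (hb : b₁ + b₂ = b) (hprop : a₁ * b₂ = a₂ * b₁)
    (hu₁ : c * (a₁ * b₁) ≤ u₁ ^ 2) (hu₂ : c * (a₂ * b₂) ≤ u₂ ^ 2) (hw : u₁ + u₂ ≤ w) :
    c * (a * b) ≤ w ^ 2 := by
  have hcross : c * (a₁ * b₂) ≤ u₁ * u₂ := by
    rw [← ENNReal.pow_le_pow_left_iff two_ne_zero]
    calc (c * (a₁ * b₂)) ^ 2 = c * c * (a₁ * b₂ * (a₂ * b₁)) := by rw [hprop]; ring
      _ = c * (a₁ * b₁) * (c * (a₂ * b₂)) := by ring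
      _ ≤ u₁ ^ 2 * u₂ ^ 2 := mul_le_mul' hu₁ hu₂
      _ = (u₁ * u₂) ^ 2 := (mul_pow u₁ u₂ 2).symm
  calc c * (a * b) = c * (a₁ * b₁) + c * (a₁ * b₂) + c * (a₂ * b₁) + c * (a₂ * b₂) := by
        rw [← ha, ← hb]; ring
    _ = c * (a₁ * b₁) + 2 * (c * (a₁ * b₂)) + c * (a₂ * b₂) := by rw [← hprop]; ring
    _ ≤ u₁ ^ 2 + 2 * (u₁ * u₂) + u₂ ^ 2 := by gcongr
    _ = (u₁ + u₂) ^ 2 := by ring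
    _ ≤ w ^ 2 := by gcongr

theorem Set.Icc_add_Icc_supset {α : Type*} [AddCommGroup α] [Lattice α] [IsOrderedAddMonoid α]
    {a b c d : α} (hab : a ≤ b) (hcd : c ≤ d) : Icc (a + c) (b + d) ⊆ Icc a b + Icc c d := by
  rintro z ⟨h₁, h₂⟩
  refine ⟨(z - d) ⊔ a, ⟨le_sup_right, sup_le (sub_le_iff_le_add.2 h₂) hab⟩,
    z - (z - d) ⊔ a, ⟨?_, sub_le_comm.1 le_sup_left⟩, add_sub_cancel _ _⟩
  exact le_sub_comm.1 (sup_le (sub_le_sub_left hcd z) (le_sub_iff_add_le.2 h₁))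

theorem IsCompact.cthickening_add_cthickening {E : Type*} [NormedAddCommGroup E]
    [NormedSpace ℝ E] [ProperSpace E] {A B : Set E} (hA : IsCompact A) (hB : IsCompact B)
    {δ ε : ℝ} (hδ : 0 ≤ δ) (hε : 0 ≤ ε) :
    cthickening δ A + cthickening ε B = cthickening (δ + ε) (A + B) := by
  rw [← hA.add_closedBall_zero hδ, ← hB.add_closedBall_zero hε, add_add_add_comm,
    closedBall_add_closedBall hδ hε, zero_add, (hA.add hB).add_closedBall_zero (add_nonneg hδ hε)]

section Coordinates

variable {n : ℕ}

theorem volume_inter_coord_le_add_ge {s : Set (Fin n → ℝ)} (hs : MeasurableSet s) (i : Fin n)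
    (t : ℝ) : volume (s ∩ {x | x i ≤ t}) + volume (s ∩ {x | t ≤ x i}) = volume s :=
  measure_inter_le_add_measure_inter_ge volume (f := LinearMap.proj i)
    (fun h => by simpa using LinearMap.congr_fun h (Pi.single i 1)) hs.nullMeasurableSet t

theorem volume_Icc_update_toReal (i : Fin n) {a b : Fin n → ℝ} (hab : a ≤ b) {s s' : ℝ}
    (hss' : s ≤ s') :
    (volume (Icc (Function.update a i s) (Function.update b i s'))).toReal =
      (s' - s) * ∏ j ∈ Finset.univ \ {i}, (b j - a j) := by
  classical
  have hle : Function.update a i s ≤ Function.update b i s' := by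
    intro j
    rcases eq_or_ne j i with rfl | hj
    · simpa using hss'
    · simpa [Function.update_of_ne hj] using hab j
  rw [Real.volume_Icc_pi_toReal hle, ← Finset.prod_update_of_mem (Finset.mem_univ i)]
  refine Finset.prod_congr rfl fun j _ => ?_
  rcases eq_or_ne j i with rfl | hj
  · simp
  · simp [Function.update_of_ne hj]

theorem Bornology.IsBounded.exists_subset_Icc {S : Set (Fin n → ℝ)}
    (hS : Bornology.IsBounded S) : ∃ a b, a ≤ b ∧ S ⊆ Icc a b := by
  obtain ⟨a, b, hab⟩ := bddBelow_bddAbove_iff_subset_Icc.1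
    ((IsOrderBornology.isBounded_iff_bddBelow_bddAbove S).1 hS)
  exact ⟨a, a ⊔ b, le_sup_left, hab.trans (Icc_subset_Icc_right le_sup_right)⟩

theorem toReal_volume_inter_ge_le_add {S : Set (Fin n → ℝ)} {a b : Fin n → ℝ} (hab : a ≤ b)
    (hS : S ⊆ Icc a b) (i : Fin n) {s s' : ℝ} (hss' : s ≤ s') :
    (volume (S ∩ {x | s ≤ x i})).toReal ≤
      (volume (S ∩ {x | s' ≤ x i})).toReal + (s' - s) * ∏ j ∈ Finset.univ \ {i}, (b j - a j) := by
  set slab := Icc (Function.update a i s) (Function.update b i s')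
  have hfin : volume (S ∩ {x | s' ≤ x i}) ≠ ⊤ :=
    ((measure_mono (inter_subset_left.trans hS)).trans_lt measure_Icc_lt_top).ne
  have hsub : S ∩ {x | s ≤ x i} ⊆ (S ∩ {x | s' ≤ x i}) ∪ slab := by
    rintro x ⟨hxS, hxi : s ≤ x i⟩
    rcases le_total s' (x i) with h | h
    · exact Or.inl ⟨hxS, h⟩
    · right
      constructor <;> intro j <;> rcases eq_or_ne j i with rfl | hj <;>
        simp [Function.update_of_ne, *, (hS hxS).1 j, (hS hxS).2 j]
  calc (volume (S ∩ {x | s ≤ x i})).toReal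
      ≤ (volume (S ∩ {x | s' ≤ x i}) + volume slab).toReal :=
        ENNReal.toReal_mono (add_ne_top.2 ⟨hfin, measure_Icc_lt_top.ne⟩)
          ((measure_mono hsub).trans (measure_union_le _ _))
    _ = _ := by
      rw [ENNReal.toReal_add hfin measure_Icc_lt_top.ne, volume_Icc_update_toReal i hab hss']

theorem lipschitzWith_volume_inter_ge {S : Set (Fin n → ℝ)} {a b : Fin n → ℝ} (hab : a ≤ b)
    (hS : S ⊆ Icc a b) (i : Fin n) :
    LipschitzWith (∏ j ∈ Finset.univ \ {i}, (b j - a j)).toNNReal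
      fun s : ℝ => (volume (S ∩ {x | s ≤ x i})).toReal := by
  refine LipschitzWith.of_le_add_mul' _ fun s s' => ?_
  rcases le_total s s' with h | h
  · rw [Real.dist_eq, abs_of_nonpos (by linarith), neg_sub, mul_comm]
    exact toReal_volume_inter_ge_le_add hab hS i h
  · have hC : 0 ≤ ∏ j ∈ Finset.univ \ {i}, (b j - a j) :=
      Finset.prod_nonneg fun j _ => sub_nonneg.2 (hab j)
    have hmono : (volume (S ∩ {x | s ≤ x i})).toReal ≤ (volume (S ∩ {x | s' ≤ x i})).toReal :=
      ENNReal.toReal_mono ((measure_mono (inter_subset_left.trans hS)).trans_lt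
        measure_Icc_lt_top).ne (measure_mono (inter_subset_inter_right _ fun x hx => h.trans hx))
    nlinarith [dist_nonneg (x := s) (y := s')]

theorem exists_toReal_volume_inter_ge_eq {S : Set (Fin n → ℝ)} (hS : Bornology.IsBounded S)
    (i : Fin n) {v : ℝ} (hv : v ∈ Icc 0 (volume S).toReal) :
    ∃ s : ℝ, (volume (S ∩ {x | s ≤ x i})).toReal = v := by
  obtain ⟨a, b, hab, hSab⟩ := hS.exists_subset_Icc
  have hlow : S ∩ {x | a i ≤ x i} = S := inter_eq_left.2 fun x hx => (hSab hx).1 i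
  have hhigh : S ∩ {x | b i + 1 ≤ x i} = ∅ :=
    eq_empty_of_forall_notMem fun x hx => by linarith [(hSab hx.1).2 i, hx.2.out]
  have := intermediate_value_Icc' (by linarith [hab i] : a i ≤ b i + 1)
    (lipschitzWith_volume_inter_ge hab hSab i).continuous.continuousOn
  rw [hlow, hhigh, measure_empty, toReal_zero] at this
  obtain ⟨s, -, hs⟩ := this hv
  exact ⟨s, hs⟩

end Coordinates

/-- The box `Icc b.1 b.2`, empty unless `b.1 ≤ b.2`. -/
abbrev Box (n : ℕ) := (Fin n → ℝ) × (Fin n → ℝ)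

namespace Box

variable {n : ℕ}

def Nondegenerate (b : Box n) : Prop := ∀ i, b.1 i < b.2 i

noncomputable instance : DecidablePred (Nondegenerate (n := n)) :=
  fun _ => Fintype.decidableForallFintype

def Separated (b c : Box n) : Prop := ∃ i, b.2 i ≤ c.1 i ∨ c.2 i ≤ b.1 i

def cutAbove (i : Fin n) (t : ℝ) (b : Box n) : Box n := (Function.update b.1 i (max (b.1 i) t), b.2)

def cutBelow (i : Fin n) (t : ℝ) (b : Box n) : Box n := (b.1, Function.update b.2 i (min (b.2 i) t))

theorem volume_Icc_eq_zero {b : Box n} (hb : ¬ b.Nondegenerate) : volume (Icc b.1 b.2) = 0 := by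
  obtain ⟨i, hi⟩ := not_forall.1 hb
  rw [Real.volume_Icc_pi]
  exact Finset.prod_eq_zero (Finset.mem_univ i)
    (ENNReal.ofReal_eq_zero.2 (sub_nonpos.2 (not_lt.1 hi)))

theorem Icc_cutAbove (i : Fin n) (t : ℝ) (b : Box n) :
    Icc (cutAbove i t b).1 (cutAbove i t b).2 = Icc b.1 b.2 ∩ {x | t ≤ x i} := by
  ext x
  simp only [cutAbove, mem_Icc, mem_inter_iff, mem_ofPred_eq, Pi.le_def]
  rw [Function.forall_update_iff b.1 (fun j y => y ≤ x j), max_le_iff]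
  grind

theorem Icc_cutBelow (i : Fin n) (t : ℝ) (b : Box n) :
    Icc (cutBelow i t b).1 (cutBelow i t b).2 = Icc b.1 b.2 ∩ {x | x i ≤ t} := by
  ext x
  simp only [cutBelow, mem_Icc, mem_inter_iff, mem_ofPred_eq, Pi.le_def]
  rw [Function.forall_update_iff b.2 (fun j y => x j ≤ y), le_min_iff]
  grind

theorem not_nondegenerate_cutAbove {i : Fin n} {t : ℝ} {b : Box n} (h : b.2 i ≤ t) :
    ¬ (cutAbove i t b).Nondegenerate := fun hb => by
  have := hb i
  simp only [cutAbove, Function.update_self] at this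
  exact absurd (le_max_right _ _ |>.trans_lt this) (not_lt.2 h)

theorem not_nondegenerate_cutBelow {i : Fin n} {t : ℝ} {b : Box n} (h : t ≤ b.1 i) :
    ¬ (cutBelow i t b).Nondegenerate := fun hb => by
  have := hb i
  simp only [cutBelow, Function.update_self] at this
  exact absurd (this.trans_le (min_le_right _ _)) (not_lt.2 h)

theorem le_cutAbove_fst (i : Fin n) (t : ℝ) (b : Box n) : b.1 ≤ (cutAbove i t b).1 := by
  intro j
  rcases eq_or_ne j i with rfl | hj
  · simp [cutAbove]
  · simp [cutAbove, Function.update_of_ne hj]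

theorem cutBelow_snd_le (i : Fin n) (t : ℝ) (b : Box n) : (cutBelow i t b).2 ≤ b.2 := by
  intro j
  rcases eq_or_ne j i with rfl | hj
  · simp [cutBelow]
  · simp [cutBelow, Function.update_of_ne hj]

theorem Separated.mono {b b' c c' : Box n} (h : Separated b c) (hb₁ : b.1 ≤ b'.1)
    (hb₂ : b'.2 ≤ b.2) (hc₁ : c.1 ≤ c'.1) (hc₂ : c'.2 ≤ c.2) : Separated b' c' := by
  obtain ⟨i, h | h⟩ := h
  · exact ⟨i, Or.inl ((hb₂ i).trans (h.trans (hc₁ i)))⟩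
  · exact ⟨i, Or.inr ((hc₂ i).trans (h.trans (hb₁ i)))⟩

end Box

section BoxUnion

variable {n : ℕ}

def boxUnion (L : List (Box n)) : Set (Fin n → ℝ) := ⋃ b ∈ L, Icc b.1 b.2

/-- Degenerate boxes are null, so discarding them costs no volume; it is what makes a cut that
misses a box shorten the list. -/
noncomputable def cutList (g : Box n → Box n) (L : List (Box n)) : List (Box n) :=
  (L.map g).filter (·.Nondegenerate)

@[simp] theorem boxUnion_nil : boxUnion ([] : List (Box n)) = ∅ := by simp [boxUnion]

@[simp] theorem boxUnion_singleton (b : Box n) : boxUnion [b] = Icc b.1 b.2 := by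
  simp [boxUnion]

theorem isCompact_boxUnion (L : List (Box n)) : IsCompact (boxUnion L) :=
  L.finite_toSet.isCompact_biUnion fun _ _ => isCompact_Icc

theorem boxUnion_map {g : Box n → Box n} {H : Set (Fin n → ℝ)}
    (hg : ∀ b, Icc (g b).1 (g b).2 = Icc b.1 b.2 ∩ H) (L : List (Box n)) :
    boxUnion (L.map g) = boxUnion L ∩ H := by
  ext x
  simp only [boxUnion, mem_iUnion, List.mem_map, mem_inter_iff, exists_prop]
  constructor
  · rintro ⟨_, ⟨b, hb, rfl⟩, hx⟩
    rw [hg] at hx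
    exact ⟨⟨b, hb, hx.1⟩, hx.2⟩
  · rintro ⟨⟨b, hb, hx⟩, hxH⟩
    exact ⟨g b, ⟨b, hb, rfl⟩, hg b ▸ ⟨hx, hxH⟩⟩

theorem boxUnion_filter_subset (p : Box n → Bool) (L : List (Box n)) :
    boxUnion (L.filter p) ⊆ boxUnion L :=
  biUnion_mono (fun _ hb => List.mem_of_mem_filter hb) fun _ _ => subset_rfl

theorem volume_boxUnion_filter_nondegenerate (L : List (Box n)) :
    volume (boxUnion (L.filter (·.Nondegenerate))) = volume (boxUnion L) := by
  refine le_antisymm (measure_mono (boxUnion_filter_subset _ L)) ?_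
  set N := ⋃ b ∈ {b | b ∈ L ∧ ¬ b.Nondegenerate}, Icc b.1 b.2
  have hnull : volume N = 0 :=
    (measure_biUnion_null_iff (L.finite_toSet.subset fun _ hb => hb.1).countable).2
      fun b hb => Box.volume_Icc_eq_zero hb.2
  have hcover : boxUnion L ⊆ boxUnion (L.filter (·.Nondegenerate)) ∪ N := by
    intro x hx
    simp only [boxUnion, mem_iUnion, exists_prop] at hx
    obtain ⟨b, hb, hxb⟩ := hx
    by_cases hnd : b.Nondegenerate
    · exact Or.inl (mem_biUnion (List.mem_filter.2 ⟨hb, decide_eq_true hnd⟩) hxb)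
    · exact Or.inr (mem_biUnion ⟨hb, hnd⟩ hxb)
  calc volume (boxUnion L) ≤ volume (boxUnion (L.filter (·.Nondegenerate))) + volume N :=
        (measure_mono hcover).trans (measure_union_le _ _)
    _ = _ := by rw [hnull, add_zero]

section Cut

variable {g : Box n → Box n} {H : Set (Fin n → ℝ)}

theorem boxUnion_cutList_subset (hg : ∀ b, Icc (g b).1 (g b).2 = Icc b.1 b.2 ∩ H)
    (L : List (Box n)) : boxUnion (cutList g L) ⊆ boxUnion L ∩ H :=
  boxUnion_map hg L ▸ boxUnion_filter_subset _ _

theorem volume_boxUnion_cutList (hg : ∀ b, Icc (g b).1 (g b).2 = Icc b.1 b.2 ∩ H)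
    (L : List (Box n)) : volume (boxUnion (cutList g L)) = volume (boxUnion L ∩ H) := by
  rw [cutList, volume_boxUnion_filter_nondegenerate, boxUnion_map hg]

theorem length_cutList_le (g : Box n → Box n) (L : List (Box n)) :
    (cutList g L).length ≤ L.length :=
  (List.length_filter_le _ _).trans (L.length_map g).le

theorem length_cutList_lt {L : List (Box n)} {b : Box n} (hb : b ∈ L)
    (hgb : ¬ (g b).Nondegenerate) : (cutList g L).length < L.length :=
  (List.length_filter_lt_length_iff_exists.2
    ⟨g b, List.mem_map_of_mem hb, by simpa using hgb⟩).trans_eq (L.length_map g)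

theorem pairwise_separated_cutList (hg₁ : ∀ b, b.1 ≤ (g b).1) (hg₂ : ∀ b, (g b).2 ≤ b.2)
    {L : List (Box n)} (hL : L.Pairwise Box.Separated) : (cutList g L).Pairwise Box.Separated :=
  (hL.map g fun b c h => h.mono (hg₁ b) (hg₂ b) (hg₁ c) (hg₂ c)).sublist List.filter_sublist

end Cut

end BoxUnion

section BrunnMinkowski

variable {n : ℕ}

theorem four_pow_mul_volume_Icc_le (a b c d : Fin n → ℝ) :
    4 ^ n * (volume (Icc a b) * volume (Icc c d)) ≤ volume (Icc a b + Icc c d) ^ 2 := by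
  by_cases hab : a ≤ b; swap
  · simp [Icc_eq_empty hab]
  by_cases hcd : c ≤ d; swap
  · simp [Icc_eq_empty hcd]
  have hp : ∀ i, 0 ≤ b i - a i := fun i => sub_nonneg.2 (hab i)
  have hq : ∀ i, 0 ≤ d i - c i := fun i => sub_nonneg.2 (hcd i)
  have hpq : ∀ i, (b + d) i - (a + c) i = (b i - a i) + (d i - c i) := fun i => by
    simp only [Pi.add_apply]; ring
  have hpq₀ : ∀ i, 0 ≤ (b + d) i - (a + c) i := fun i => hpq i ▸ add_nonneg (hp i) (hq i)
  have hpq₁ : ∀ i, 0 ≤ 4 * ((b i - a i) * (d i - c i)) := fun i =>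
    mul_nonneg zero_le_four (mul_nonneg (hp i) (hq i))
  calc 4 ^ n * (volume (Icc a b) * volume (Icc c d))
      = ENNReal.ofReal (∏ i, 4 * ((b i - a i) * (d i - c i))) := by
        rw [Real.volume_Icc_pi, Real.volume_Icc_pi,
          ENNReal.ofReal_prod_of_nonneg fun i _ => hpq₁ i]
        simp [ENNReal.ofReal_mul, hp, Finset.prod_mul_distrib]
    _ ≤ ENNReal.ofReal (∏ i, ((b + d) i - (a + c) i) ^ 2) := by
        refine ENNReal.ofReal_le_ofReal (Finset.prod_le_prod (fun i _ => hpq₁ i) fun i _ => ?_)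
        rw [hpq]
        nlinarith [sq_nonneg ((b i - a i) - (d i - c i))]
    _ = volume (Icc (a + c) (b + d)) ^ 2 := by
        rw [Finset.prod_pow, Real.volume_Icc_pi,
          ENNReal.ofReal_pow (Finset.prod_nonneg fun i _ => hpq₀ i),
          ENNReal.ofReal_prod_of_nonneg fun i _ => hpq₀ i]
    _ ≤ volume (Icc a b + Icc c d) ^ 2 := by gcongr; exact Icc_add_Icc_supset hab hcd

theorem exists_separating_coord_of_two_le_length {L : List (Box n)}
    (hL : L.Pairwise Box.Separated) (h : 2 ≤ L.length) :
    ∃ i t, ∃ b₀ ∈ L, b₀.2 i ≤ t ∧ ∃ b₁ ∈ L, t ≤ b₁.1 i := by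
  obtain ⟨b₀, b₁, L, rfl⟩ : ∃ b₀ b₁ L', L = b₀ :: b₁ :: L' := by
    rcases L with _ | ⟨b₀, _ | ⟨b₁, L⟩⟩
    · simp at h
    · simp at h
    · exact ⟨b₀, b₁, L, rfl⟩
  obtain ⟨i, h | h⟩ := List.rel_of_pairwise_cons hL (List.mem_cons_self ..)
  · exact ⟨i, b₀.2 i, b₀, by simp, le_rfl, b₁, by simp, h⟩
  · exact ⟨i, b₁.2 i, b₁, by simp, le_rfl, b₀, by simp, h⟩

theorem exists_volume_inter_coord_proportional {A B : Set (Fin n → ℝ)} (hA : IsCompact A)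
    (hB : IsCompact B) (i : Fin n) (t : ℝ) : ∃ s : ℝ,
      volume (A ∩ {x | x i ≤ t}) * volume (B ∩ {x | s ≤ x i}) =
        volume (A ∩ {x | t ≤ x i}) * volume (B ∩ {x | x i ≤ s}) := by
  have hfin : ∀ {S T : Set (Fin n → ℝ)}, IsCompact T → S ⊆ T → volume S ≠ ⊤ := fun hT hST =>
    (hT.isBounded.subset hST).measure_lt_top.ne
  by_cases ha0 : volume A = 0
  · refine ⟨0, ?_⟩
    rw [measure_mono_null inter_subset_left ha0, measure_mono_null inter_subset_left ha0,
      zero_mul, zero_mul]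
  set a₁ := volume (A ∩ {x | x i ≤ t})
  set a₂ := volume (A ∩ {x | t ≤ x i})
  have hapos : 0 < (volume A).toReal := toReal_pos ha0 (hfin hA subset_rfl)
  obtain ⟨s, hs⟩ := exists_toReal_volume_inter_ge_eq hB.isBounded i
    (v := a₂.toReal * (volume B).toReal / (volume A).toReal)
    ⟨by positivity, div_le_of_le_mul₀ hapos.le toReal_nonneg (by
      rw [mul_comm]
      exact mul_le_mul_of_nonneg_left
        (toReal_mono (hfin hA subset_rfl) (measure_mono inter_subset_left)) toReal_nonneg)⟩
  refine ⟨s, ?_⟩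
  set b₁ := volume (B ∩ {x | x i ≤ s})
  set b₂ := volume (B ∩ {x | s ≤ x i})
  have ha₁ : a₁ ≠ ⊤ := hfin hA inter_subset_left
  have ha₂ : a₂ ≠ ⊤ := hfin hA inter_subset_left
  have hb₁ : b₁ ≠ ⊤ := hfin hB inter_subset_left
  have hb₂ : b₂ ≠ ⊤ := hfin hB inter_subset_left
  have ha : a₁.toReal + a₂.toReal = (volume A).toReal := by
    rw [← toReal_add ha₁ ha₂, volume_inter_coord_le_add_ge hA.measurableSet]
  have hb : b₁.toReal + b₂.toReal = (volume B).toReal := by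
    rw [← toReal_add hb₁ hb₂, volume_inter_coord_le_add_ge hB.measurableSet]
  rw [← toReal_eq_toReal_iff' (mul_ne_top ha₁ hb₂) (mul_ne_top ha₂ hb₁), toReal_mul, toReal_mul,
    eq_sub_of_add_eq hb, hs, eq_sub_of_add_eq ha]
  field_simp

theorem volume_add_add_volume_add_le {A B S₁ S₂ T₁ T₂ : Set (Fin n → ℝ)}
    (hAB : MeasurableSet (A + B)) {i : Fin n} {t s : ℝ}
    (hS₁ : S₁ ⊆ A ∩ {x | x i ≤ t}) (hT₁ : T₁ ⊆ B ∩ {x | x i ≤ s})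
    (hS₂ : S₂ ⊆ A ∩ {x | t ≤ x i}) (hT₂ : T₂ ⊆ B ∩ {x | s ≤ x i}) :
    volume (S₁ + T₁) + volume (S₂ + T₂) ≤ volume (A + B) := by
  rw [← volume_inter_coord_le_add_ge hAB i (t + s)]
  gcongr
  · rintro _ ⟨x, hx, y, hy, rfl⟩
    obtain ⟨hxA, hxt : x i ≤ t⟩ := hS₁ hx
    obtain ⟨hyB, hys : y i ≤ s⟩ := hT₁ hy
    exact ⟨add_mem_add hxA hyB, show x i + y i ≤ t + s from add_le_add hxt hys⟩
  · rintro _ ⟨x, hx, y, hy, rfl⟩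
    obtain ⟨hxA, hxt : t ≤ x i⟩ := hS₂ hx
    obtain ⟨hyB, hys : s ≤ y i⟩ := hT₂ hy
    exact ⟨add_mem_add hxA hyB, show t + s ≤ x i + y i from add_le_add hxt hys⟩

theorem four_pow_mul_volume_boxUnion_le_of_cut {L M : List (Box n)}
    (hL : L.Pairwise Box.Separated) (hM : M.Pairwise Box.Separated) {i : Fin n} {t : ℝ}
    {b₀ b₁ : Box n} (hb₀ : b₀ ∈ L) (hb₀t : b₀.2 i ≤ t) (hb₁ : b₁ ∈ L) (hb₁t : t ≤ b₁.1 i)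
    (ih : ∀ L' M' : List (Box n), L'.length + M'.length < L.length + M.length →
      L'.Pairwise Box.Separated → M'.Pairwise Box.Separated →
      4 ^ n * (volume (boxUnion L') * volume (boxUnion M')) ≤
        volume (boxUnion L' + boxUnion M') ^ 2) :
    4 ^ n * (volume (boxUnion L) * volume (boxUnion M)) ≤
      volume (boxUnion L + boxUnion M) ^ 2 := by
  have hA := isCompact_boxUnion L
  have hB := isCompact_boxUnion M
  obtain ⟨s, hprop⟩ := exists_volume_inter_coord_proportional hA hB i t
  refine ENNReal.mul_mul_le_sq_of_split (volume_inter_coord_le_add_ge hA.measurableSet i t)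
    (volume_inter_coord_le_add_ge hB.measurableSet i s) hprop ?_ ?_
    (volume_add_add_volume_add_le (hA.add hB).measurableSet
      (boxUnion_cutList_subset (Box.Icc_cutBelow i t) L)
      (boxUnion_cutList_subset (Box.Icc_cutBelow i s) M)
      (boxUnion_cutList_subset (Box.Icc_cutAbove i t) L)
      (boxUnion_cutList_subset (Box.Icc_cutAbove i s) M))
  · have := ih _ _ (Nat.add_lt_add_of_lt_of_le
      (length_cutList_lt hb₁ (Box.not_nondegenerate_cutBelow hb₁t)) (length_cutList_le _ M))
      (pairwise_separated_cutList (g := Box.cutBelow i t) (fun _ => le_rfl)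
        (Box.cutBelow_snd_le i t) hL)
      (pairwise_separated_cutList (g := Box.cutBelow i s) (fun _ => le_rfl)
        (Box.cutBelow_snd_le i s) hM)
    rwa [volume_boxUnion_cutList (Box.Icc_cutBelow i t),
      volume_boxUnion_cutList (Box.Icc_cutBelow i s)] at this
  · have := ih _ _ (Nat.add_lt_add_of_lt_of_le
      (length_cutList_lt hb₀ (Box.not_nondegenerate_cutAbove hb₀t)) (length_cutList_le _ M))
      (pairwise_separated_cutList (g := Box.cutAbove i t) (Box.le_cutAbove_fst i t)
        (fun _ => le_rfl) hL)
      (pairwise_separated_cutList (g := Box.cutAbove i s) (Box.le_cutAbove_fst i s)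
        (fun _ => le_rfl) hM)
    rwa [volume_boxUnion_cutList (Box.Icc_cutAbove i t),
      volume_boxUnion_cutList (Box.Icc_cutAbove i s)] at this

theorem four_pow_mul_volume_boxUnion_le {L M : List (Box n)} (hL : L.Pairwise Box.Separated)
    (hM : M.Pairwise Box.Separated) :
    4 ^ n * (volume (boxUnion L) * volume (boxUnion M)) ≤
      volume (boxUnion L + boxUnion M) ^ 2 := by
  induction hN : L.length + M.length using Nat.strong_induction_on generalizing L M with
  | _ N ih =>
  subst hN
  by_cases hL2 : 2 ≤ L.length
  · obtain ⟨i, t, b₀, hb₀, hb₀t, b₁, hb₁, hb₁t⟩ := exists_separating_coord_of_two_le_length hL hL2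
    exact four_pow_mul_volume_boxUnion_le_of_cut hL hM hb₀ hb₀t hb₁ hb₁t
      fun L' M' hlt hL' hM' => ih _ hlt hL' hM' rfl
  by_cases hM2 : 2 ≤ M.length
  · obtain ⟨i, t, b₀, hb₀, hb₀t, b₁, hb₁, hb₁t⟩ := exists_separating_coord_of_two_le_length hM hM2
    rw [mul_comm (volume _), add_comm (boxUnion L)]
    exact four_pow_mul_volume_boxUnion_le_of_cut hM hL hb₀ hb₀t hb₁ hb₁t
      fun L' M' hlt hL' hM' => ih _ (by omega) hL' hM' rfl
  match L, M, hL2, hM2 with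
  | [], _, _, _ => simp
  | _, [], _, _ => simp
  | [b], [c], _, _ => simpa using four_pow_mul_volume_Icc_le b.1 b.2 c.1 c.2
  | _ :: _ :: _, _, h, _ => simp at h
  | _, _ :: _ :: _, _, h => simp at h

theorem exists_boxUnion_between {A : Set (Fin n → ℝ)} (hA : Bornology.IsBounded A) {ε : ℝ}
    (hε : 0 < ε) : ∃ L : List (Box n), L.Pairwise Box.Separated ∧ A ⊆ boxUnion L ∧
      boxUnion L ⊆ cthickening ε A := by
  classical
  obtain ⟨a, b, -, hAab⟩ := hA.exists_subset_Icc
  let cube : (Fin n → ℤ) → Box n := fun z => (fun j => z j * ε, fun j => (z j + 1) * ε)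
  let Z := (Finset.Icc (fun j => ⌊a j / ε⌋) (fun j => ⌊b j / ε⌋)).filter
    fun z => Icc (cube z).1 (cube z).2 ⊆ cthickening ε A
  refine ⟨Z.toList.map cube, List.Pairwise.map cube (fun z z' hzz' => ?_) Z.nodup_toList,
    fun x hx => ?_, ?_⟩
  · obtain ⟨j, hj⟩ := Function.ne_iff.1 hzz'
    rcases hj.lt_or_gt with h | h
    · exact ⟨j, Or.inl (mul_le_mul_of_nonneg_right (by exact_mod_cast h) hε.le)⟩
    · exact ⟨j, Or.inr (mul_le_mul_of_nonneg_right (by exact_mod_cast h) hε.le)⟩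
  · set z : Fin n → ℤ := fun j => ⌊x j / ε⌋
    have hxz : x ∈ Icc (cube z).1 (cube z).2 := ⟨fun j => (le_div_iff₀ hε).1 (Int.floor_le _),
      fun j => ((div_lt_iff₀ hε).1 (Int.lt_floor_add_one _)).le⟩
    have hcube : Icc (cube z).1 (cube z).2 ⊆ cthickening ε A := fun y hy =>
      mem_cthickening_of_dist_le y x ε A hx <| (dist_pi_le_iff hε.le).2 fun j => by
        rw [Real.dist_eq, abs_le]
        have := hy.1 j; have := hy.2 j; have := hxz.1 j; have := hxz.2 j
        simp only [cube] at *
        constructor <;> nlinarith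
    have hzZ : z ∈ Z := by
      refine Finset.mem_filter.2 ⟨Finset.mem_Icc.2 ⟨fun j => ?_, fun j => ?_⟩, hcube⟩
      · exact Int.floor_mono (div_le_div_of_nonneg_right ((hAab hx).1 j) hε.le)
      · exact Int.floor_mono (div_le_div_of_nonneg_right ((hAab hx).2 j) hε.le)
    exact mem_biUnion (List.mem_map_of_mem (Finset.mem_toList.2 hzZ)) hxz
  · refine iUnion₂_subset fun b hb => ?_
    obtain ⟨z, hz, rfl⟩ := List.mem_map.1 hb
    exact (Finset.mem_filter.1 (Finset.mem_toList.1 hz)).2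

theorem four_pow_mul_volume_le_volume_add_sq {A B : Set (Fin n → ℝ)} (hA : IsCompact A)
    (hB : IsCompact B) : 4 ^ n * (volume A * volume B) ≤ volume (A + B) ^ 2 := by
  have hlim : Tendsto (fun r => volume (cthickening r (A + B)) ^ 2) (𝓝[>] 0)
      (𝓝 (volume (A + B) ^ 2)) :=
    ((ENNReal.continuous_pow 2).tendsto _).comp
      ((tendsto_measure_cthickening_of_isCompact (hA.add hB)).mono_left nhdsWithin_le_nhds)
  refine ge_of_tendsto hlim (eventually_mem_nhdsWithin.mono fun r (hr : 0 < r) => ?_)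
  obtain ⟨L, hL, hAL, hLA⟩ := exists_boxUnion_between hA.isBounded (half_pos hr)
  obtain ⟨M, hM, hBM, hMB⟩ := exists_boxUnion_between hB.isBounded (half_pos hr)
  calc 4 ^ n * (volume A * volume B) ≤ 4 ^ n * (volume (boxUnion L) * volume (boxUnion M)) := by
        gcongr
    _ ≤ volume (boxUnion L + boxUnion M) ^ 2 := four_pow_mul_volume_boxUnion_le hL hM
    _ ≤ volume (cthickening r (A + B)) ^ 2 := by
        gcongr
        rw [← add_halves r, ← hA.cthickening_add_cthickening hB (half_pos hr).le (half_pos hr).le]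
        exact add_subset_add hLA hMB

theorem two_pow_mul_volume_le_volume_sub {K : Set (Fin n → ℝ)} (hK : IsCompact K) :
    2 ^ n * volume K ≤ volume (K - K) := by
  have := four_pow_mul_volume_le_volume_add_sq hK hK.neg
  rwa [Measure.measure_neg, ← sub_eq_add_neg, ← sq, show (4 : ℝ≥0∞) ^ n = (2 ^ n) ^ 2 by
    rw [← pow_mul, mul_comm, pow_mul]; norm_num, ← mul_pow,
    ENNReal.pow_le_pow_left_iff two_ne_zero] at this

theorem two_mul_volume_inter_ge_of_vadd_smul_sub_subset {K : Set (Fin n → ℝ)}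
    (hK : IsCompact K) {c : ℝ} (hc : 0 ≤ c) {x : Fin n → ℝ} (hx : x +ᵥ c • (K - K) ⊆ K)
    {f : (Fin n → ℝ) →ₗ[ℝ] ℝ} (hf : f ≠ 0) :
    ENNReal.ofReal (c ^ n) * (2 ^ n * volume K) ≤ 2 * volume (K ∩ {y | f x ≤ f y}) := by
  have hS : IsCompact (c • (K - K)) := (sub_eq_add_neg K K ▸ hK.add hK.neg).smul c
  calc ENNReal.ofReal (c ^ n) * (2 ^ n * volume K)
      ≤ ENNReal.ofReal (c ^ n) * volume (K - K) := by
        gcongr; exact two_pow_mul_volume_le_volume_sub hK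
    _ = volume (c • (K - K)) := by
        rw [Measure.addHaar_smul, Module.finrank_fin_fun, abs_of_nonneg (by positivity)]
    _ = 2 * volume ((x +ᵥ c • (K - K)) ∩ {y | f x ≤ f y}) :=
        (two_mul_measure_vadd_inter_ge volume hf hS.measurableSet.nullMeasurableSet
          (by rw [← smul_set_neg, neg_sub]) x).symm
    _ ≤ 2 * volume (K ∩ {y | f x ≤ f y}) := by gcongr

end BrunnMinkowski

theorem stmt7_general {n : ℕ} (K : Set (Fin n → ℝ))
    (hKcomp : IsCompact K)
    (Kbar : Set (Fin n → ℝ))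
    (hKbar : Kbar = {x | x +ᵥ (1 / (4 * n) : ℝ) • (K - K) ⊆ K})
    (xstar : Fin n → ℝ) (hx : xstar ∈ Kbar)
    (w : Fin n → ℝ) (hw : w ≠ 0)
    (Hplus : Set (Fin n → ℝ))
    (hH : Hplus = {x | ∑ j, w j * x j ≤ ∑ j, w j * xstar j}) :
    volume (K ∩ Hplus) ≤
      ENNReal.ofReal (1 - 1 / ((n : ℝ) ^ n * 2 ^ (n + 1))) * volume K := by
  subst hKbar hH
  set f : (Fin n → ℝ) →ₗ[ℝ] ℝ := dotProductBilin ℝ ℝ w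
  have hf : f ≠ 0 := fun h => hw (dotProduct_self_eq_zero.1 (LinearMap.congr_fun h w))
  have hcut := two_mul_volume_inter_ge_of_vadd_smul_sub_subset hKcomp (by positivity) hx hf
  have hconst : ENNReal.ofReal ((1 / (4 * n)) ^ n) * 2 ^ n =
      2 * ENNReal.ofReal (1 / ((n : ℝ) ^ n * 2 ^ (n + 1))) := by
    rw [← ofReal_ofNat 2, ← ofReal_pow zero_le_two, ← ofReal_mul (by positivity),
      ← ofReal_mul zero_le_two, div_pow, one_pow, mul_pow, pow_succ,
      show (4 : ℝ) ^ n = 2 ^ n * 2 ^ n by rw [← mul_pow]; norm_num]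
    field_simp
  rw [← mul_assoc, hconst, mul_assoc, ENNReal.mul_le_mul_iff_right two_ne_zero ofNat_ne_top] at hcut
  exact ENNReal.le_ofReal_one_sub_mul hKcomp.measure_lt_top.ne
    (measure_inter_le_add_measure_inter_ge volume hf hKcomp.measurableSet.nullMeasurableSet
      (f xstar)) hcut

theorem stmt7 {n : ℕ} (hn : 1 ≤ n) (K : Set (Fin n → ℝ))
    (hKcomp : IsCompact K) (hKconv : Convex ℝ K)
    (hKint : (interior K).Nonempty)
    (Kbar : Set (Fin n → ℝ))
    (hKbar : Kbar = {x | x +ᵥ (1 / (4 * n) : ℝ) • (K - K) ⊆ K})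
    (xstar : Fin n → ℝ) (hx : xstar ∈ Kbar)
    (w : Fin n → ℝ) (hw : w ≠ 0)
    (Hplus : Set (Fin n → ℝ))
    (hH : Hplus = {x | ∑ j, w j * x j ≤ ∑ j, w j * xstar j}) :
    volume (K ∩ Hplus) ≤
      ENNReal.ofReal (1 - 1 / ((n : ℝ) ^ n * 2 ^ (n + 1))) * volume K :=
  stmt7_general K hKcomp Kbar hKbar xstar hx w hw Hplus hH
end

section
/- Let n ≥ 2, let Λ be a full-rank lattice in ℝ^n, let C := {x ∈ ℝ^n : (1/(2(n−1)))·Σ_{i=1}^{n−1} x_i² ≤ x_n ≤ 1} and C̄ := {x ∈ ℝ^n : Σ_{i=1}^{n−1} x_i² ≤ x_n ≤ 1}. If the interior of C̄ contains no point of Λ, then the lattice points C ∩ Λ can be covered by at most 4^n · n^{3n} hyperplanes. -/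
/-!
`C` lies in the box `[-2n, 2n)ⁿ`, which is cut into `(4n³)ⁿ = 4ⁿ n³ⁿ` cells of side `1/n²`.
If the lattice points in one cell affinely spanned `ℝⁿ`, their differences would contain a basis
of lattice vectors of sup-norm at most `1/n²`; rounding the coordinates of `(0, …, 0, 1/2)` in
that basis yields a lattice point within `1/(2n)` of it, and such a point lies in the interior
of `C̄`. Hence the lattice points of each cell lie on a common hyperplane.
-/

open MeasureTheory ENNReal Pointwise

/-- A full-rank lattice in `ℝⁿ`: the image of `ℤⁿ` under an invertible
linear map. -/
def IsFullLattice {n : ℕ} (Λ : Set (Fin n → ℝ)) : Prop :=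
  ∃ B : (Fin n → ℝ) ≃ₗ[ℝ] (Fin n → ℝ),
    Λ = ⇑B '' {x | ∀ i, ∃ z : ℤ, x i = (z : ℝ)}

open Finset Module

theorem IsFullLattice.exists_addSubgroup_eq {n : ℕ} {Λ : Set (Fin n → ℝ)} (hΛ : IsFullLattice Λ) :
    ∃ H : AddSubgroup (Fin n → ℝ), (H : Set (Fin n → ℝ)) = Λ := by
  obtain ⟨B, rfl⟩ := hΛ
  refine ⟨((Int.castAddHom ℝ).compLeft (Fin n)).range.map B.toAddMonoidHom, ?_⟩
  ext x
  simp [funext_iff, Classical.skolem, eq_comm]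

theorem exists_sum_mul_eq_of_vectorSpan_ne_top {ι K : Type*} [Fintype ι] [DecidableEq ι] [Field K]
    {S : Set (ι → K)} (hS : vectorSpan K S ≠ ⊤) :
    ∃ c : ι → K, c ≠ 0 ∧ ∃ γ, ∀ x ∈ S, ∑ j, c j * x j = γ := by
  obtain ⟨φ, hφ0, hφS⟩ :=
    Submodule.exists_dual_map_eq_bot_of_lt_top (lt_top_iff_ne_top.mpr hS) inferInstance
  have hφ : ∀ x, φ x = ∑ j, φ (Pi.single j 1) * x j := fun x => by
    rw [φ.pi_apply_eq_sum_univ x]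
    congr! 1 with j
    rw [smul_eq_mul, mul_comm]
    congr
    ext k
    simp [Pi.single_apply, eq_comm]
  refine ⟨fun j => φ (Pi.single j 1),
    fun h => hφ0 (LinearMap.ext fun x => by simp [hφ x, congrFun h]), ?_⟩
  rcases S.eq_empty_or_nonempty with rfl | ⟨s₀, hs₀⟩
  · exact ⟨0, by simp⟩
  refine ⟨φ s₀, fun x hx => ?_⟩
  have hker : φ (x -ᵥ s₀) = 0 := by
    simpa [hφS] using Submodule.mem_map_of_mem (f := φ) (vsub_mem_vectorSpan K hx hs₀)
  rw [← hφ, ← sub_eq_zero, ← map_sub]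
  exact hker

theorem AddSubgroup.exists_norm_sub_le_of_span_eq_top {V : Type*} [NormedAddCommGroup V]
    [NormedSpace ℝ V] [FiniteDimensional ℝ V] (H : AddSubgroup V) {D : Set V} {δ : ℝ}
    (hDH : D ⊆ H) (hD : ∀ d ∈ D, ‖d‖ ≤ δ) (hspan : Submodule.span ℝ D = ⊤) (t : V) :
    ∃ y ∈ H, ‖y - t‖ ≤ finrank ℝ V * δ / 2 := by
  obtain ⟨b, hbD, hb, hli⟩ := exists_linearIndependent ℝ D
  let e : Basis b ℝ V := Basis.mk hli (by simp [hb, hspan])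
  have : Fintype b := FiniteDimensional.fintypeBasisIndex e
  set a := e.repr t
  have ht : t = ∑ i, a i • (i : V) := by
    simpa only [e, Basis.mk_apply] using (e.sum_repr t).symm
  refine ⟨∑ i, round (a i) • (i : V), sum_mem fun i _ => zsmul_mem (hDH (hbD i.2)) _, ?_⟩
  calc ‖∑ i, round (a i) • (i : V) - t‖
      = ‖∑ i, (round (a i) - a i) • (i : V)‖ := by
        simp [ht, sub_smul, Int.cast_smul_eq_zsmul]
    _ ≤ ∑ i : b, 1 / 2 * δ := by
        refine norm_sum_le_of_le _ fun i _ => ?_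
        rw [norm_smul, Real.norm_eq_abs, abs_sub_comm]
        exact mul_le_mul (abs_sub_round _) (hD _ (hbD i.2)) (norm_nonneg _) (by norm_num)
    _ = finrank ℝ V * δ / 2 := by
        rw [sum_const, card_univ, ← finrank_eq_card_basis e, nsmul_eq_mul]
        ring

theorem AddSubgroup.exists_sum_mul_eq_or_exists_norm_sub_le {ι : Type*} [Fintype ι]
    [DecidableEq ι] (H : AddSubgroup (ι → ℝ)) {S : Set (ι → ℝ)} {δ : ℝ} (hSH : S ⊆ H)
    (hS : ∀ x ∈ S, ∀ y ∈ S, ‖x - y‖ ≤ δ) :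
    (∃ c : ι → ℝ, c ≠ 0 ∧ ∃ γ, ∀ x ∈ S, ∑ j, c j * x j = γ) ∨
      ∀ t, ∃ y ∈ H, ‖y - t‖ ≤ Fintype.card ι * δ / 2 := by
  by_cases hspan : vectorSpan ℝ S = ⊤
  · right
    intro t
    rw [vectorSpan_def] at hspan
    simpa using H.exists_norm_sub_le_of_span_eq_top
      (by rintro _ ⟨x, hx, y, hy, rfl⟩; exact H.sub_mem (hSH hx) (hSH hy))
      (by rintro _ ⟨x, hx, y, hy, rfl⟩; exact hS x hx y hy) hspan t
  · exact Or.inl (exists_sum_mul_eq_of_vectorSpan_ne_top hspan)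

theorem exists_cell_index_norm_sub_lt {ι : Type*} [Fintype ι] {A : Set (ι → ℝ)} {a b h : ℝ}
    {K : ℕ} [NeZero K] (hh : 0 < h) (hK : b - a ≤ K * h) (hA : ∀ x ∈ A, ∀ j, x j ∈ Set.Ico a b) :
    ∃ f : (ι → ℝ) → ι → Fin K, ∀ x ∈ A, ∀ y ∈ A, f x = f y → ‖x - y‖ < h := by
  have hcell : ∀ x ∈ A, ∀ j, (⌊(x j - a) / h⌋.toNat : ℤ) = ⌊(x j - a) / h⌋ ∧
      ⌊(x j - a) / h⌋.toNat < K := by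
    intro x hx j
    obtain ⟨hax, hxb⟩ := hA x hx j
    have h0 : 0 ≤ ⌊(x j - a) / h⌋ := Int.floor_nonneg.mpr (div_nonneg (by linarith) hh.le)
    have hlt : ⌊(x j - a) / h⌋ < K := by
      rw [Int.floor_lt, div_lt_iff₀ hh]
      push_cast
      linarith
    omega
  refine ⟨fun x j => Fin.ofNat K ⌊(x j - a) / h⌋.toNat, fun x hx y hy hxy => ?_⟩
  refine (pi_norm_lt_iff hh).mpr fun j => ?_
  have hfloor : ⌊(x j - a) / h⌋ = ⌊(y j - a) / h⌋ := by
    have := congrArg Fin.val (congrFun hxy j)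
    simp only [Fin.val_ofNat, Nat.mod_eq_of_lt (hcell x hx j).2,
      Nat.mod_eq_of_lt (hcell y hy j).2] at this
    rw [← (hcell x hx j).1, ← (hcell y hy j).1, this]
  have := Int.abs_sub_lt_one_of_floor_eq_floor hfloor
  rwa [← sub_div, sub_sub_sub_cancel_right, abs_div, abs_of_pos hh, div_lt_one hh] at this

theorem mem_Ico_of_mul_sum_sq_le {ι : Type*} {s : Finset ι} {l j : ι} {α R : ℝ} {x : ι → ℝ}
    (hα : 0 < α) (hR : 1 < R) (hαR : 1 < α * R ^ 2)
    (hx : α * ∑ i ∈ s, x i ^ 2 ≤ x l ∧ x l ≤ 1) (hj : j ∈ s ∨ j = l) :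
    x j ∈ Set.Ico (-R) R := by
  have hsum : 0 ≤ α * ∑ i ∈ s, x i ^ 2 := mul_nonneg hα.le (sum_nonneg fun i _ => sq_nonneg _)
  rcases hj with hj | rfl
  · have hxj : α * x j ^ 2 ≤ α * ∑ i ∈ s, x i ^ 2 :=
      mul_le_mul_of_nonneg_left (single_le_sum (fun i _ => sq_nonneg (x i)) hj) hα.le
    have hxR := abs_lt_of_sq_lt_sq'
      (lt_of_mul_lt_mul_left (a := α) (by linarith) hα.le) (by linarith : 0 ≤ R)
    exact ⟨hxR.1.le, hxR.2⟩
  · exact ⟨by linarith, by linarith⟩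

theorem mem_Ico_of_paraboloid {n : ℕ} (hn : 2 ≤ n) {l : Fin n} (hl : (l : ℕ) = n - 1)
    {x : Fin n → ℝ} (hx : 1 / (2 * ((n : ℝ) - 1)) *
      ∑ i ∈ univ.filter (fun i : Fin n => (i : ℕ) < n - 1), x i ^ 2 ≤ x l ∧ x l ≤ 1)
    (j : Fin n) : x j ∈ Set.Ico (-(2 * n : ℝ)) (2 * n) := by
  have hnR : (2 : ℝ) ≤ n := by exact_mod_cast hn
  refine mem_Ico_of_mul_sum_sq_le (one_div_pos.mpr (by linarith)) (by linarith) ?_ hx ?_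
  · rw [div_mul_eq_mul_div, one_mul, one_lt_div (by linarith)]
    nlinarith
  · by_cases hj : (j : ℕ) < n - 1
    · exact Or.inl (by simp [hj])
    · exact Or.inr (Fin.ext (by omega))

theorem sum_sq_lt_and_lt_one_of_norm_sub_single_le {ι : Type*} [Fintype ι] [DecidableEq ι]
    {s : Finset ι} {l : ι} (hl : l ∉ s) {y : ι → ℝ} {ε : ℝ}
    (hy : ‖y - Pi.single l (1 / 2)‖ ≤ ε) (hε : #s * ε ^ 2 + ε < 1 / 2) :
    ∑ i ∈ s, y i ^ 2 < y l ∧ y l < 1 := by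
  have hcoord : ∀ i, |y i - (Pi.single l (1 / 2) : ι → ℝ) i| ≤ ε := fun i => by
    simpa only [Pi.sub_apply, Real.norm_eq_abs] using (norm_le_pi_norm _ i).trans hy
  have hyl := abs_le.mp (hcoord l)
  rw [Pi.single_eq_same] at hyl
  have hsum : ∑ i ∈ s, y i ^ 2 ≤ #s * ε ^ 2 := by
    rw [← nsmul_eq_mul, ← sum_const]
    refine sum_le_sum fun i hi => ?_
    have hyi := hcoord i
    rw [Pi.single_eq_of_ne (ne_of_mem_of_not_mem hi hl), sub_zero] at hyi
    exact sq_le_sq' (abs_le.mp hyi).1 (abs_le.mp hyi).2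
  have hε0 : 0 ≤ #s * ε ^ 2 := by positivity
  constructor <;> linarith

theorem mem_interior_of_norm_sub_single_le {ι : Type*} [Fintype ι] [DecidableEq ι]
    {s : Finset ι} {l : ι} (hl : l ∉ s) {y : ι → ℝ} {ε : ℝ}
    (hy : ‖y - Pi.single l (1 / 2)‖ ≤ ε) (hε : #s * ε ^ 2 + ε < 1 / 2) :
    y ∈ interior {x : ι → ℝ | ∑ i ∈ s, x i ^ 2 ≤ x l ∧ x l ≤ 1} := by
  have hopen : IsOpen {x : ι → ℝ | ∑ i ∈ s, x i ^ 2 < x l ∧ x l < 1} :=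
    (isOpen_lt (f := fun x : ι → ℝ => ∑ i ∈ s, x i ^ 2) (by fun_prop) (continuous_apply l)).and
      (isOpen_lt (continuous_apply l) continuous_const)
  exact interior_maximal (Set.ofPred_subset_ofPred.mpr fun x hx => ⟨hx.1.le, hx.2.le⟩) hopen
    (sum_sq_lt_and_lt_one_of_norm_sub_single_le hl hy hε)

theorem card_mul_sq_add_lt_half {n m : ℕ} (hn : 2 ≤ n) (hm : m ≤ n) :
    m * (n * (1 / n ^ 2 : ℝ) / 2) ^ 2 + n * (1 / n ^ 2 : ℝ) / 2 < 1 / 2 := by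
  have hnR : (2 : ℝ) ≤ n := by exact_mod_cast hn
  calc _ ≤ n * (n * (1 / n ^ 2 : ℝ) / 2) ^ 2 + n * (1 / n ^ 2 : ℝ) / 2 := by gcongr
    _ = 3 / (4 * n) := by field_simp; ring
    _ < 1 / 2 := by rw [div_lt_div_iff₀ (by positivity) (by norm_num)]; linarith

theorem stmt13 {n : ℕ} (hn : 2 ≤ n) (Λ : Set (Fin n → ℝ))
    (hΛ : IsFullLattice Λ)
    (C Cbar : Set (Fin n → ℝ))
    (hC : C = {x | (1 / (2 * ((n : ℝ) - 1))) *
        (∑ i ∈ Finset.univ.filter (fun i : Fin n => (i : ℕ) < n - 1), (x i) ^ 2) ≤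
          x ⟨n - 1, by omega⟩ ∧ x ⟨n - 1, by omega⟩ ≤ 1})
    (hCbar : Cbar = {x | (∑ i ∈ Finset.univ.filter (fun i : Fin n => (i : ℕ) < n - 1),
        (x i) ^ 2) ≤ x ⟨n - 1, by omega⟩ ∧ x ⟨n - 1, by omega⟩ ≤ 1})
    (hempty : interior Cbar ∩ Λ = ∅) :
    ∃ (c : Fin (4 ^ n * n ^ (3 * n)) → (Fin n → ℝ))
      (γ : Fin (4 ^ n * n ^ (3 * n)) → ℝ),
      (∀ k, c k ≠ 0) ∧
      ∀ x ∈ C ∩ Λ, ∃ k, ∑ j, c k j * x j = γ k := by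
  obtain ⟨H, rfl⟩ := hΛ.exists_addSubgroup_eq
  have : NeZero (4 * n ^ 3) := ⟨by positivity⟩
  obtain ⟨f, hf⟩ := exists_cell_index_norm_sub_lt (K := 4 * n ^ 3) (h := 1 / n ^ 2)
    (by positivity) (le_of_eq (by push_cast; field_simp; ring))
    fun x (hx : x ∈ C) => mem_Ico_of_paraboloid hn rfl (by rwa [hC] at hx)
  have hplane : ∀ k, ∃ c : Fin n → ℝ, c ≠ 0 ∧ ∃ γ,
      ∀ x ∈ {x | x ∈ C ∩ H ∧ f x = k}, ∑ j, c j * x j = γ := by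
    refine fun k => (H.exists_sum_mul_eq_or_exists_norm_sub_le (δ := 1 / n ^ 2) (fun x hx => hx.1.2)
      fun x hx y hy => (hf x hx.1.1 y hy.1.1 (hx.2.trans hy.2.symm)).le).resolve_right ?_
    intro hdense
    obtain ⟨y, hyH, hy⟩ := hdense (Pi.single ⟨n - 1, by omega⟩ (1 / 2))
    rw [Fintype.card_fin] at hy
    have hyint : y ∈ interior Cbar := hCbar ▸ mem_interior_of_norm_sub_single_le (by simp) hy
      (card_mul_sq_add_lt_half hn ((card_filter_le _ _).trans (by simp)))
    exact hempty.subset ⟨hyint, hyH⟩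
  choose c hc γ hγ using hplane
  let e : (Fin n → Fin (4 * n ^ 3)) ≃ Fin (4 ^ n * n ^ (3 * n)) :=
    Fintype.equivFinOfCardEq (by simp [mul_pow, pow_mul])
  exact ⟨c ∘ e.symm, γ ∘ e.symm, fun k => hc _,
    fun x hx => ⟨e (f x), by simpa using hγ (f x) x ⟨hx, rfl⟩⟩⟩
end

section
/- Let Λ be a full-rank lattice in ℝ^n and let Q be a box d + [0, 1/n²]^n for some d ∈ ℝ^n. Suppose Q contains n+1 affinely independent points v_0,…,v_n of Λ. Then the set Z := {Σ_{i=1}^n λ_i (v_i − v_0) : −1/2 ≤ λ_i ≤ 1/2} satisfies Z + Λ = ℝ^n; in particular every translate of [−1/(2n), 1/(2n)]^n contains a lattice point of Λ. -/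
open MeasureTheory ENNReal Pointwise

def integerPoints (ι : Type*) : AddSubgroup (ι → ℝ) where
  carrier := {x | ∀ i, ∃ z : ℤ, x i = (z : ℝ)}
  add_mem' {x y} hx hy i := by
    obtain ⟨a, ha⟩ := hx i
    obtain ⟨b, hb⟩ := hy i
    exact ⟨a + b, by simp [ha, hb]⟩
  zero_mem' _ := ⟨0, by simp⟩
  neg_mem' {x} hx i := by
    obtain ⟨a, ha⟩ := hx i
    exact ⟨-a, by simp [ha]⟩

theorem IsFullLattice.exists_addSubgroup {n : ℕ} {Λ : Set (Fin n → ℝ)} (hΛ : IsFullLattice Λ) :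
    ∃ L : AddSubgroup (Fin n → ℝ), (L : Set (Fin n → ℝ)) = Λ := by
  obtain ⟨B, rfl⟩ := hΛ
  exact ⟨(integerPoints (Fin n)).map B.toAddMonoidHom, AddSubgroup.coe_map _ _⟩

theorem AffineIndependent.linearIndependent_succ_sub_zero {k E : Type*} [Ring k]
    [AddCommGroup E] [Module k E] {n : ℕ} {v : Fin (n + 1) → E} (h : AffineIndependent k v) :
    LinearIndependent k fun i : Fin n => v i.succ - v 0 := by
  have h0 := (affineIndependent_iff_linearIndependent_vsub k v 0).mp h
  have := h0.comp (fun i : Fin n => (⟨i.succ, Fin.succ_ne_zero i⟩ : {x : Fin (n + 1) // x ≠ 0}))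
    fun a b hab => Fin.succ_injective n (congrArg Subtype.val hab)
  simpa [Function.comp_def] using this

theorem Module.Basis.exists_abs_le_half_sub_mem_closure {ι E : Type*} [Fintype ι]
    [AddCommGroup E] [Module ℝ E] (b : Module.Basis ι ℝ E) (x : E) :
    ∃ l : ι → ℝ, (∀ i, |l i| ≤ 1 / 2) ∧
      x - ∑ i, l i • b i ∈ AddSubgroup.closure (Set.range b) := by
  refine ⟨fun i => b.repr x i - round (b.repr x i), fun i => abs_sub_round _, ?_⟩
  have hx : x - ∑ i, (b.repr x i - round (b.repr x i)) • b i = ∑ i, round (b.repr x i) • b i := by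
    nth_rw 1 [← b.sum_repr x]
    simp only [sub_smul, Finset.sum_sub_distrib, Int.cast_smul_eq_zsmul]
    exact sub_sub_cancel _ _
  rw [hx]
  exact AddSubgroup.sum_mem _ fun i _ =>
    AddSubgroup.zsmul_mem _ (AddSubgroup.subset_closure (Set.mem_range_self i)) _

theorem AffineIndependent.exists_abs_le_half_sub_mem {E : Type*} [AddCommGroup E] [Module ℝ E]
    [FiniteDimensional ℝ E] {n : ℕ} (hE : Module.finrank ℝ E = n) {L : AddSubgroup E}
    {v : Fin (n + 1) → E} (hindep : AffineIndependent ℝ v) (hvL : ∀ i, v i ∈ L) (x : E) :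
    ∃ l : Fin n → ℝ, (∀ i, |l i| ≤ 1 / 2) ∧ x - ∑ i, l i • (v i.succ - v 0) ∈ L := by
  let b := basisOfLinearIndependentOfCardEqFinrank' _ hindep.linearIndependent_succ_sub_zero
    (by simp [hE])
  have hbL : AddSubgroup.closure (Set.range b) ≤ L := by
    refine (AddSubgroup.closure_le L).mpr ?_
    rintro _ ⟨i, rfl⟩
    simpa [b] using L.sub_mem (hvL i.succ) (hvL 0)
  obtain ⟨l, hl, hmem⟩ := b.exists_abs_le_half_sub_mem_closure x
  exact ⟨l, hl, hbL (by simpa [b] using hmem)⟩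

theorem abs_sum_smul_apply_le {ι κ : Type*} [Fintype ι] {l : ι → ℝ} {w : ι → κ → ℝ} {a c : ℝ}
    (hl : ∀ i, |l i| ≤ a) (hw : ∀ i j, |w i j| ≤ c) (j : κ) :
    |(∑ i, l i • w i) j| ≤ Fintype.card ι * (a * c) := by
  rw [Finset.sum_apply]
  calc |∑ i, (l i • w i) j| ≤ ∑ i, |l i| * |w i j| := by
        simpa only [Pi.smul_apply, smul_eq_mul, abs_mul] using
          Finset.abs_sum_le_sum_abs (fun i => (l i • w i) j) Finset.univ
    _ ≤ ∑ _i : ι, a * c :=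
        Finset.sum_le_sum fun i _ =>
          mul_le_mul (hl i) (hw i j) (abs_nonneg _) ((abs_nonneg _).trans (hl i))
    _ = Fintype.card ι * (a * c) := by simp

theorem stmt14_general {n : ℕ} (Λ : Set (Fin n → ℝ))
    (hΛ : IsFullLattice Λ) (d : Fin n → ℝ)
    (v : Fin (n + 1) → (Fin n → ℝ))
    (hvΛ : ∀ i, v i ∈ Λ)
    (hvbox : ∀ i j, v i j ∈ Set.Icc (d j) (d j + 1 / (n : ℝ) ^ 2))
    (hindep : AffineIndependent ℝ v)
    (Z : Set (Fin n → ℝ))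
    (hZ : Z = {x | ∃ l : Fin n → ℝ,
        (∀ i, -(1 / 2 : ℝ) ≤ l i ∧ l i ≤ 1 / 2) ∧
        x = ∑ i, l i • (v i.succ - v 0)}) :
    Z + Λ = Set.univ ∧
      ∀ t : Fin n → ℝ, ∃ p ∈ Λ, ∀ j, |p j - t j| ≤ 1 / (2 * n) := by
  obtain ⟨L, rfl⟩ := hΛ.exists_addSubgroup
  have hcover := hindep.exists_abs_le_half_sub_mem (by simp) hvΛ
  have hw : ∀ (i : Fin n) j, |(v i.succ - v 0) j| ≤ 1 / (n : ℝ) ^ 2 := fun i j => by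
    simpa [Real.dist_eq] using Real.dist_le_of_mem_Icc (hvbox i.succ j) (hvbox 0 j)
  refine ⟨Set.eq_univ_of_forall fun x => ?_, fun t => ?_⟩
  · obtain ⟨l, hl, hmem⟩ := hcover x
    exact ⟨_, hZ ▸ ⟨l, fun i => abs_le.mp (hl i), rfl⟩, _, hmem, add_sub_cancel _ _⟩
  · obtain ⟨l, hl, hmem⟩ := hcover t
    refine ⟨_, hmem, fun j => ?_⟩
    calc |(t - ∑ i, l i • (v i.succ - v 0)) j - t j| = |(∑ i, l i • (v i.succ - v 0)) j| := by
          simp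
      _ ≤ n * (1 / 2 * (1 / (n : ℝ) ^ 2)) := by simpa using abs_sum_smul_apply_le hl hw j
      _ = 1 / (2 * n) := by rcases eq_or_ne (n : ℝ) 0 with h | h <;> field_simp [h]

theorem stmt14 {n : ℕ} (hn : 1 ≤ n) (Λ : Set (Fin n → ℝ))
    (hΛ : IsFullLattice Λ) (d : Fin n → ℝ)
    (v : Fin (n + 1) → (Fin n → ℝ))
    (hvΛ : ∀ i, v i ∈ Λ)
    (hvbox : ∀ i j, v i j ∈ Set.Icc (d j) (d j + 1 / (n : ℝ) ^ 2))
    (hindep : AffineIndependent ℝ v)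
    (Z : Set (Fin n → ℝ))
    (hZ : Z = {x | ∃ l : Fin n → ℝ,
        (∀ i, -(1 / 2 : ℝ) ≤ l i ∧ l i ≤ 1 / 2) ∧
        x = ∑ i, l i • (v i.succ - v 0)}) :
    Z + Λ = Set.univ ∧
      ∀ t : Fin n → ℝ, ∃ p ∈ Λ, ∀ j, |p j - t j| ≤ 1 / (2 * n) :=
  stmt14_general Λ hΛ d v hvΛ hvbox hindep Z hZ
end
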